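/- (Concrete machine refines the abstract machine.) Fix a concrete lattice for 𝓛 and let the concrete machine run the fault handler φ_{𝓡^abs} = genFaultHandler 𝓡^abs. Then (≈ⁱᶜ, ≈ᵉᶜ) is a refinement of the abstract IFC machine into the concrete machine: whenever (p, args, n, L) ≈ⁱᶜ (p, args', n, Tag(L)) and the concrete machine emits trace t₂ from its initial state, the abstract machine emits from its initial state a trace t₁ of equal length with corresponding events ≈ᵉᶜ-related. -/

import Mathlib

/-! ### Generic machines, traces, refinement, observation, TINI -/

/-- A generic machine: states, events, inputs, a step relation (with optional
event; `none` is the silent action τ), and an initialization function. -/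
structure Machine (S E I : Type) where
  step : S → Option E → S → Prop
  init : I → S

/-- `Traces step s t s'`: the machine runs from `s` to `s'` emitting the
(non-silent) events collected in the list `t`. -/
inductive Traces {S E : Type} (step : S → Option E → S → Prop) : S → List E → S → Prop
  | nil (s : S) : Traces step s [] s
  | event {s₁ s₂ s₃ : S} {e : E} {t : List E} :
      step s₁ (some e) s₂ → Traces step s₂ t s₃ → Traces step s₁ (e :: t) s₃
  | silent {s₁ s₂ s₃ : S} {t : List E} :
      step s₁ none s₂ → Traces step s₂ t s₃ → Traces step s₁ t s₃

/-- `Emits step s t`: from `s` the machine can emit the trace `t`. -/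
def Emits {S E : Type} (step : S → Option E → S → Prop) (s : S) (t : List E) : Prop :=
  ∃ s', Traces step s t s'

/-- Refinement of `M₁` into `M₂` via relations on inputs and events. -/
def Refinement {S₁ E₁ I₁ S₂ E₂ I₂ : Type} (M₁ : Machine S₁ E₁ I₁) (M₂ : Machine S₂ E₂ I₂)
    (Ri : I₁ → I₂ → Prop) (Re : E₁ → E₂ → Prop) : Prop :=
  ∀ i₁ i₂ t₂, Ri i₁ i₂ → Emits M₂.step (M₂.init i₂) t₂ →
    ∃ t₁, Emits M₁.step (M₁.init i₁) t₁ ∧ List.Forall₂ Re t₁ t₂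

/-- Refinement via states. -/
def StateRefinement {S₁ E₁ I₁ S₂ E₂ I₂ : Type} (M₁ : Machine S₁ E₁ I₁) (M₂ : Machine S₂ E₂ I₂)
    (Rs : S₁ → S₂ → Prop) (Re : E₁ → E₂ → Prop) : Prop :=
  ∀ s₁ s₂ t₂, Rs s₁ s₂ → Emits M₂.step s₂ t₂ →
    ∃ t₁, Emits M₁.step s₁ t₁ ∧ List.Forall₂ Re t₁ t₂

open Classical in
/-- Filter the unobservable events out of a trace. -/
noncomputable def filterObs {E : Type} (obs : E → Prop) : List E → List E
  | [] => []
  | e :: t => if obs e then e :: filterObs obs t else filterObs obs t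

/-- Indistinguishability of traces: pairwise equal up to the length of the shorter. -/
inductive IndistTrace {E : Type} : List E → List E → Prop
  | nilL (t : List E) : IndistTrace [] t
  | nilR (t : List E) : IndistTrace t []
  | cons (e : E) {t₁ t₂ : List E} : IndistTrace t₁ t₂ → IndistTrace (e :: t₁) (e :: t₂)

/-- Observability of actions: silent actions are never observable. -/
def ObsAct {E : Type} (obs : E → Prop) (α : Option E) : Prop :=
  ∃ e, α = some e ∧ obs e

/-- Indistinguishability of actions: equal, or both unobservable. -/
def ActIndist {E : Type} (obs : E → Prop) (α₁ α₂ : Option E) : Prop :=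
  α₁ = α₂ ∨ (¬ ObsAct obs α₁ ∧ ¬ ObsAct obs α₂)

/-- Indistinguishability of events: equal, or both unobservable. -/
def EvIndist {E : Type} (obs : E → Prop) (e₁ e₂ : E) : Prop :=
  e₁ = e₂ ∨ (¬ obs e₁ ∧ ¬ obs e₂)

/-- Termination-insensitive noninterference for a machine with a notion of
observation `(Ω, obsE, indistI)`. -/
def TINI {S E I Ω : Type} (M : Machine S E I)
    (obsE : Ω → E → Prop) (indistI : Ω → I → I → Prop) : Prop :=
  ∀ o i₁ i₂ t₁ t₂, indistI o i₁ i₂ →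
    Emits M.step (M.init i₁) t₁ → Emits M.step (M.init i₂) t₂ →
    IndistTrace (filterObs (obsE o) t₁) (filterObs (obsE o) t₂)

/-! ### The abstract IFC machine -/

/-- Labeled atoms: an integer payload together with an IFC label. -/
structure Atom (L : Type) where
  val : ℤ
  lab : L

/-- The instruction set (shared by all machines). -/
inductive Instr : Type where
  | add
  | push (m : ℤ)
  | load
  | store
  | jump
  | bnz (k : ℤ)
  | call
  | ret
  | output

/-- Instruction memories. -/
abbrev InstrMem : Type := ℤ → Option Instr

/-- Stack elements: data atoms or return frames. -/
inductive StkElt (L : Type) : Type where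
  | data : Atom L → StkElt L
  | ret : Atom L → StkElt L

/-- Abstract machine states: data memory, stack, program counter. -/
structure AState (L : Type) where
  mem : ℤ → Option (Atom L)
  stk : List (StkElt L)
  pc : Atom L

/-- Memory update. -/
def updMem {L : Type} (μ : ℤ → Option (Atom L)) (p : ℤ) (a : Atom L) :
    ℤ → Option (Atom L) :=
  fun q => if q = p then some a else μ q

section Abstract

variable {L : Type} [SemilatticeSup L] [OrderBot L]

/-- The step relation of the abstract IFC machine, with fixed instruction
memory `ι`.  Actions are `Option (Atom L)`: `none` is silent, `some a` emits
the event `a`. -/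
inductive AStep (ι : InstrMem) : AState L → Option (Atom L) → AState L → Prop
  | add {μ : ℤ → Option (Atom L)} {σ : List (StkElt L)} {n n₁ n₂ : ℤ} {Lpc L₁ L₂ : L} :
      ι n = some .add →
      AStep ι ⟨μ, .data ⟨n₁, L₁⟩ :: .data ⟨n₂, L₂⟩ :: σ, ⟨n, Lpc⟩⟩ none
              ⟨μ, .data ⟨n₁ + n₂, L₁ ⊔ L₂⟩ :: σ, ⟨n + 1, Lpc⟩⟩
  | push {μ : ℤ → Option (Atom L)} {σ : List (StkElt L)} {n m : ℤ} {Lpc : L} :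
      ι n = some (.push m) →
      AStep ι ⟨μ, σ, ⟨n, Lpc⟩⟩ none ⟨μ, .data ⟨m, ⊥⟩ :: σ, ⟨n + 1, Lpc⟩⟩
  | load {μ : ℤ → Option (Atom L)} {σ : List (StkElt L)} {n p m : ℤ} {Lpc L₁ L₂ : L} :
      ι n = some .load → μ p = some ⟨m, L₂⟩ →
      AStep ι ⟨μ, .data ⟨p, L₁⟩ :: σ, ⟨n, Lpc⟩⟩ none
              ⟨μ, .data ⟨m, L₁ ⊔ L₂⟩ :: σ, ⟨n + 1, Lpc⟩⟩
  | store {μ : ℤ → Option (Atom L)} {σ : List (StkElt L)} {n p m k : ℤ}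
      {Lpc L₁ L₂ L₃ : L} :
      ι n = some .store → μ p = some ⟨k, L₃⟩ → L₁ ⊔ Lpc ≤ L₃ →
      AStep ι ⟨μ, .data ⟨p, L₁⟩ :: .data ⟨m, L₂⟩ :: σ, ⟨n, Lpc⟩⟩ none
              ⟨updMem μ p ⟨m, L₁ ⊔ L₂ ⊔ Lpc⟩, σ, ⟨n + 1, Lpc⟩⟩
  | jump {μ : ℤ → Option (Atom L)} {σ : List (StkElt L)} {n n' : ℤ} {Lpc L₁ : L} :
      ι n = some .jump →
      AStep ι ⟨μ, .data ⟨n', L₁⟩ :: σ, ⟨n, Lpc⟩⟩ none ⟨μ, σ, ⟨n', L₁ ⊔ Lpc⟩⟩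
  | bnz {μ : ℤ → Option (Atom L)} {σ : List (StkElt L)} {n m k : ℤ} {Lpc L₁ : L} :
      ι n = some (.bnz k) →
      AStep ι ⟨μ, .data ⟨m, L₁⟩ :: σ, ⟨n, Lpc⟩⟩ none
              ⟨μ, σ, ⟨n + (if m = 0 then 1 else k), L₁ ⊔ Lpc⟩⟩
  | call {μ : ℤ → Option (Atom L)} {σ : List (StkElt L)} {n n' : ℤ} {Lpc L₁ : L} :
      ι n = some .call →
      AStep ι ⟨μ, .data ⟨n', L₁⟩ :: σ, ⟨n, Lpc⟩⟩ none
              ⟨μ, .ret ⟨n + 1, Lpc⟩ :: σ, ⟨n', L₁ ⊔ Lpc⟩⟩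
  | ret {μ : ℤ → Option (Atom L)} {σ : List (StkElt L)} {n : ℤ} {Lpc : L} {pc' : Atom L} :
      ι n = some .ret →
      AStep ι ⟨μ, .ret pc' :: σ, ⟨n, Lpc⟩⟩ none ⟨μ, σ, pc'⟩
  | output {μ : ℤ → Option (Atom L)} {σ : List (StkElt L)} {n m : ℤ} {Lpc L₁ : L} :
      ι n = some .output →
      AStep ι ⟨μ, .data ⟨m, L₁⟩ :: σ, ⟨n, Lpc⟩⟩ (some ⟨m, L₁ ⊔ Lpc⟩)
              ⟨μ, σ, ⟨n + 1, Lpc⟩⟩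

/-- Indistinguishability of atoms at observer `o`: equal, or both unobservable. -/
def AtomIndist (o : L) (a₁ a₂ : Atom L) : Prop :=
  a₁ = a₂ ∨ (¬ a₁.lab ≤ o ∧ ¬ a₂.lab ≤ o)

/-- Pointwise indistinguishability of memories. -/
def MemIndist (o : L) (μ₁ μ₂ : ℤ → Option (Atom L)) : Prop :=
  ∀ p, Option.Rel (AtomIndist o) (μ₁ p) (μ₂ p)

/-- Indistinguishability of stack elements: data matches data, return frames
match return frames, componentwise. -/
inductive EltIndist (o : L) : StkElt L → StkElt L → Prop
  | data {a₁ a₂ : Atom L} : AtomIndist o a₁ a₂ → EltIndist o (.data a₁) (.data a₂)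
  | ret {a₁ a₂ : Atom L} : AtomIndist o a₁ a₂ → EltIndist o (.ret a₁) (.ret a₂)

open Classical in
/-- Stack filtering: drop data atoms and unobservable return frames, keeping the
whole remaining stack at the first observable return frame. -/
noncomputable def stkFilter (o : L) : List (StkElt L) → List (StkElt L)
  | [] => []
  | .data _ :: σ => stkFilter o σ
  | .ret a :: σ => if a.lab ≤ o then .ret a :: σ else stkFilter o σ

/-- A state is observable when the label of its pc flows to the observer. -/
def StateObs (o : L) (s : AState L) : Prop := s.pc.lab ≤ o

/-- Indistinguishability of abstract machine states. -/
def StateIndist (o : L) (s₁ s₂ : AState L) : Prop :=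
  (s₁.pc.lab ≤ o ∧ s₂.pc.lab ≤ o ∧ s₁.pc = s₂.pc ∧
    List.Forall₂ (EltIndist o) s₁.stk s₂.stk ∧ MemIndist o s₁.mem s₂.mem) ∨
  (¬ s₁.pc.lab ≤ o ∧ ¬ s₂.pc.lab ≤ o ∧ MemIndist o s₁.mem s₂.mem ∧
    List.Forall₂ (EltIndist o) (stkFilter o s₁.stk) (stkFilter o s₂.stk))

/-- Input data for the abstract machine: program, initial stack of atoms,
memory size, initial label. -/
structure AInput (L : Type) where
  prog : InstrMem
  args : List (Atom L)
  size : ℕ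
  lab : L

/-- Initial state for the abstract machine: the program is loaded as the
instruction memory, the memory consists of `size` copies of `0 @ lab`, the
stack holds the arguments, and the pc is `0 @ lab`. -/
def aInit (i : AInput L) : InstrMem × AState L :=
  (i.prog,
   ⟨fun q => if 0 ≤ q ∧ q < (i.size : ℤ) then some ⟨0, i.lab⟩ else none,
    i.args.map .data, ⟨0, i.lab⟩⟩)

/-- The abstract machine step relation as a generic machine step (the fixed
instruction memory is part of the state and is preserved). -/
def AStepP : (InstrMem × AState L) → Option (Atom L) → (InstrMem × AState L) → Prop :=
  fun s α s' => s'.1 = s.1 ∧ AStep s.1 s.2 α s'.2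

/-- Indistinguishability of abstract inputs: same program, memory size and
initial label, pointwise indistinguishable argument lists. -/
def AInputIndist (o : L) (i₁ i₂ : AInput L) : Prop :=
  i₁.prog = i₂.prog ∧ i₁.size = i₂.size ∧ i₁.lab = i₂.lab ∧
  List.Forall₂ (AtomIndist o) i₁.args i₂.args

/-- The abstract IFC machine as a generic machine. -/
def AMachine (L : Type) [SemilatticeSup L] [OrderBot L] :
    Machine (InstrMem × AState L) (Atom L) (AInput L) :=
  ⟨AStepP, aInit⟩

end Abstract

/-! ### The symbolic IFC rule machine -/

/-- Instruction opcodes. -/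
inductive Opcode : Type where
  | add | push | load | store | jump | bnz | call | ret | output
deriving DecidableEq

/-- Label expressions of the symbolic IFC rule DSL. -/
inductive LExpr : Type where
  | bot
  | labPC
  | lab1
  | lab2
  | lab3
  | join : LExpr → LExpr → LExpr

/-- Boolean expressions of the symbolic IFC rule DSL. -/
inductive BExpr : Type where
  | tru
  | flows : LExpr → LExpr → BExpr

/-- A symbolic IFC rule: an allow condition, an expression for the label of the
next pc, and an expression for the label of the result. -/
structure SRule : Type where
  allow : BExpr
  rpc : LExpr
  res : LExpr

/-- A symbolic IFC rule table assigns a rule to every opcode. -/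
abbrev RuleTable : Type := Opcode → SRule

section Symbolic

variable {L : Type} [SemilatticeSup L] [OrderBot L]

/-- Evaluation of label expressions at an input tuple `ρ = (L_pc, ℓ₁, ℓ₂, ℓ₃)`. -/
def evalL (ρ : L × L × L × L) : LExpr → L
  | .bot => ⊥
  | .labPC => ρ.1
  | .lab1 => ρ.2.1
  | .lab2 => ρ.2.2.1
  | .lab3 => ρ.2.2.2
  | .join e₁ e₂ => evalL ρ e₁ ⊔ evalL ρ e₂

/-- Evaluation of boolean expressions. -/
def evalB (ρ : L × L × L × L) : BExpr → Prop
  | .tru => True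
  | .flows e₁ e₂ => evalL ρ e₁ ≤ evalL ρ e₂

/-- The IFC enforcement judgment `⊢_𝓡 ρ ⇝_op ⟨L_rpc, L_r⟩`. -/
def Judge (R : RuleTable) (ρ : L × L × L × L) (op : Opcode) (Lrpc Lr : L) : Prop :=
  evalB ρ (R op).allow ∧ evalL ρ (R op).rpc = Lrpc ∧ evalL ρ (R op).res = Lr

/-- The step relation of the symbolic rule machine, parameterized by a rule
table `R` and a fixed instruction memory `ι`. -/
inductive QStep (R : RuleTable) (ι : InstrMem) :
    AState L → Option (Atom L) → AState L → Prop
  | add {μ : ℤ → Option (Atom L)} {σ : List (StkElt L)} {n n₁ n₂ : ℤ}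
      {Lpc L₁ L₂ Lrpc Lr : L} :
      ι n = some .add → Judge R (Lpc, L₁, L₂, ⊥) .add Lrpc Lr →
      QStep R ι ⟨μ, .data ⟨n₁, L₁⟩ :: .data ⟨n₂, L₂⟩ :: σ, ⟨n, Lpc⟩⟩ none
                ⟨μ, .data ⟨n₁ + n₂, Lr⟩ :: σ, ⟨n + 1, Lrpc⟩⟩
  | push {μ : ℤ → Option (Atom L)} {σ : List (StkElt L)} {n m : ℤ} {Lpc Lrpc Lr : L} :
      ι n = some (.push m) → Judge R (Lpc, ⊥, ⊥, ⊥) .push Lrpc Lr →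
      QStep R ι ⟨μ, σ, ⟨n, Lpc⟩⟩ none ⟨μ, .data ⟨m, Lr⟩ :: σ, ⟨n + 1, Lrpc⟩⟩
  | load {μ : ℤ → Option (Atom L)} {σ : List (StkElt L)} {n p m : ℤ}
      {Lpc L₁ L₂ Lrpc Lr : L} :
      ι n = some .load → μ p = some ⟨m, L₂⟩ →
      Judge R (Lpc, L₁, L₂, ⊥) .load Lrpc Lr →
      QStep R ι ⟨μ, .data ⟨p, L₁⟩ :: σ, ⟨n, Lpc⟩⟩ none
                ⟨μ, .data ⟨m, Lr⟩ :: σ, ⟨n + 1, Lrpc⟩⟩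
  | store {μ : ℤ → Option (Atom L)} {σ : List (StkElt L)} {n p m k : ℤ}
      {Lpc L₁ L₂ L₃ Lrpc Lr : L} :
      ι n = some .store → μ p = some ⟨k, L₃⟩ →
      Judge R (Lpc, L₁, L₂, L₃) .store Lrpc Lr →
      QStep R ι ⟨μ, .data ⟨p, L₁⟩ :: .data ⟨m, L₂⟩ :: σ, ⟨n, Lpc⟩⟩ none
                ⟨updMem μ p ⟨m, Lr⟩, σ, ⟨n + 1, Lrpc⟩⟩
  | jump {μ : ℤ → Option (Atom L)} {σ : List (StkElt L)} {n n' : ℤ}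
      {Lpc L₁ Lrpc Lr : L} :
      ι n = some .jump → Judge R (Lpc, L₁, ⊥, ⊥) .jump Lrpc Lr →
      QStep R ι ⟨μ, .data ⟨n', L₁⟩ :: σ, ⟨n, Lpc⟩⟩ none ⟨μ, σ, ⟨n', Lrpc⟩⟩
  | bnz {μ : ℤ → Option (Atom L)} {σ : List (StkElt L)} {n m k : ℤ}
      {Lpc L₁ Lrpc Lr : L} :
      ι n = some (.bnz k) → Judge R (Lpc, L₁, ⊥, ⊥) .bnz Lrpc Lr →
      QStep R ι ⟨μ, .data ⟨m, L₁⟩ :: σ, ⟨n, Lpc⟩⟩ none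
                ⟨μ, σ, ⟨n + (if m = 0 then 1 else k), Lrpc⟩⟩
  | call {μ : ℤ → Option (Atom L)} {σ : List (StkElt L)} {n n' : ℤ}
      {Lpc L₁ Lrpc Lr : L} :
      ι n = some .call → Judge R (Lpc, L₁, ⊥, ⊥) .call Lrpc Lr →
      QStep R ι ⟨μ, .data ⟨n', L₁⟩ :: σ, ⟨n, Lpc⟩⟩ none
                ⟨μ, .ret ⟨n + 1, Lr⟩ :: σ, ⟨n', Lrpc⟩⟩
  | ret {μ : ℤ → Option (Atom L)} {σ : List (StkElt L)} {n m : ℤ}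
      {Lpc L₁ Lrpc Lr : L} :
      ι n = some .ret → Judge R (Lpc, L₁, ⊥, ⊥) .ret Lrpc Lr →
      QStep R ι ⟨μ, .ret ⟨m, L₁⟩ :: σ, ⟨n, Lpc⟩⟩ none ⟨μ, σ, ⟨m, Lrpc⟩⟩
  | output {μ : ℤ → Option (Atom L)} {σ : List (StkElt L)} {n m : ℤ}
      {Lpc L₁ Lrpc Lr : L} :
      ι n = some .output → Judge R (Lpc, L₁, ⊥, ⊥) .output Lrpc Lr →
      QStep R ι ⟨μ, .data ⟨m, L₁⟩ :: σ, ⟨n, Lpc⟩⟩ (some ⟨m, Lr⟩)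
                ⟨μ, σ, ⟨n + 1, Lrpc⟩⟩

/-- The symbolic rule machine step relation as a generic machine step (the
instruction memory is part of the state and preserved). -/
def QStepP (R : RuleTable) :
    (InstrMem × AState L) → Option (Atom L) → (InstrMem × AState L) → Prop :=
  fun s α s' => s'.1 = s.1 ∧ QStep R s.1 s.2 α s'.2

end Symbolic

/-- The rule table `𝓡^abs` corresponding to the IFC mechanism of the abstract
machine. -/
def RabsTable : RuleTable
  | .add => ⟨.tru, .labPC, .join .lab1 .lab2⟩
  | .output => ⟨.tru, .labPC, .join .lab1 .labPC⟩
  | .push => ⟨.tru, .labPC, .bot⟩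
  | .load => ⟨.tru, .labPC, .join .lab1 .lab2⟩
  | .store => ⟨.flows (.join .lab1 .labPC) .lab3, .labPC, .join (.join .lab1 .lab2) .labPC⟩
  | .jump => ⟨.tru, .join .lab1 .labPC, .bot⟩
  | .bnz => ⟨.tru, .join .lab1 .labPC, .bot⟩
  | .call => ⟨.tru, .join .lab1 .labPC, .labPC⟩
  | .ret => ⟨.tru, .lab1, .bot⟩

/-! ### The concrete machine -/

/-- The default tag. -/
def TD : ℤ := -1

/-- Concrete atoms: an integer payload and an integer tag. -/
structure CAtom : Type where
  val : ℤ
  tag : ℤ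
deriving DecidableEq

/-- Concrete stack elements: data atoms, or return frames saving a pc atom and
a privilege bit (`true` = kernel mode). -/
inductive CStkElt : Type where
  | data : CAtom → CStkElt
  | ret : CAtom → Bool → CStkElt

/-- Concrete machine states: privilege bit (`true` = kernel), kernel data
memory (whose first seven cells form the rule cache), user data memory, stack,
and pc. -/
structure CState : Type where
  priv : Bool
  kmem : ℤ → Option CAtom
  umem : ℤ → Option CAtom
  stk : List CStkElt
  pc : CAtom

/-- Concrete memory update. -/
def updC (μ : ℤ → Option CAtom) (p : ℤ) (a : CAtom) : ℤ → Option CAtom :=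
  fun q => if q = p then some a else μ q

/-- Integer encoding of opcodes. -/
def encOp : Opcode → ℤ
  | .add => 0 | .push => 1 | .load => 2 | .store => 3 | .jump => 4
  | .bnz => 5 | .call => 6 | .ret => 7 | .output => 8

/-- The input part of the rule cache holds the given opcode and tags. -/
def cacheIn (κ : ℤ → Option CAtom) (op Tpc T₁ T₂ T₃ : ℤ) : Prop :=
  κ 0 = some ⟨op, TD⟩ ∧ κ 1 = some ⟨Tpc, TD⟩ ∧ κ 2 = some ⟨T₁, TD⟩ ∧
  κ 3 = some ⟨T₂, TD⟩ ∧ κ 4 = some ⟨T₃, TD⟩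

/-- The output part of the rule cache holds the given result tags. -/
def cacheOut (κ : ℤ → Option CAtom) (Trpc Tr : ℤ) : Prop :=
  κ 5 = some ⟨Trpc, TD⟩ ∧ κ 6 = some ⟨Tr, TD⟩

/-- Install a faulting instruction's opcode and tags in the cache input part,
resetting the output part to default tags. -/
def installCache (κ : ℤ → Option CAtom) (op Tpc T₁ T₂ T₃ : ℤ) : ℤ → Option CAtom :=
  fun q =>
    if q = 0 then some ⟨op, TD⟩ else if q = 1 then some ⟨Tpc, TD⟩
    else if q = 2 then some ⟨T₁, TD⟩ else if q = 3 then some ⟨T₂, TD⟩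
    else if q = 4 then some ⟨T₃, TD⟩ else if q = 5 then some ⟨TD, TD⟩
    else if q = 6 then some ⟨TD, TD⟩ else κ q

/-- The step relation of the concrete machine, given a user instruction memory
`ι` and a kernel instruction memory `φ`.  In user mode (`priv = false`) an
instruction either hits in the rule cache and executes with the cached output
tags, or misses, stores its opcode and tags in the cache input, pushes a return
frame, and traps to kernel address 0.  In kernel mode (`priv = true`)
instructions are fetched from `φ`, tags are ignored (`Load`/`Store` preserve the
tag of the datum), `Output` is forbidden, and `Ret` restores the saved pc and
privilege bit. -/
inductive CStep (ι φ : InstrMem) : CState → Option CAtom → CState → Prop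
  -- user mode, cache hit
  | addH {κ μ : ℤ → Option CAtom} {σ : List CStkElt} {n n₁ n₂ Tpc T₁ T₂ Trpc Tr : ℤ} :
      ι n = some .add → cacheIn κ (encOp .add) Tpc T₁ T₂ TD → cacheOut κ Trpc Tr →
      CStep ι φ ⟨false, κ, μ, .data ⟨n₁, T₁⟩ :: .data ⟨n₂, T₂⟩ :: σ, ⟨n, Tpc⟩⟩ none
                ⟨false, κ, μ, .data ⟨n₁ + n₂, Tr⟩ :: σ, ⟨n + 1, Trpc⟩⟩
  | pushH {κ μ : ℤ → Option CAtom} {σ : List CStkElt} {n m Tpc Trpc Tr : ℤ} :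
      ι n = some (.push m) → cacheIn κ (encOp .push) Tpc TD TD TD → cacheOut κ Trpc Tr →
      CStep ι φ ⟨false, κ, μ, σ, ⟨n, Tpc⟩⟩ none
                ⟨false, κ, μ, .data ⟨m, Tr⟩ :: σ, ⟨n + 1, Trpc⟩⟩
  | loadH {κ μ : ℤ → Option CAtom} {σ : List CStkElt} {n p m Tpc T₁ T₂ Trpc Tr : ℤ} :
      ι n = some .load → μ p = some ⟨m, T₂⟩ →
      cacheIn κ (encOp .load) Tpc T₁ T₂ TD → cacheOut κ Trpc Tr →
      CStep ι φ ⟨false, κ, μ, .data ⟨p, T₁⟩ :: σ, ⟨n, Tpc⟩⟩ none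
                ⟨false, κ, μ, .data ⟨m, Tr⟩ :: σ, ⟨n + 1, Trpc⟩⟩
  | storeH {κ μ : ℤ → Option CAtom} {σ : List CStkElt} {n p m k Tpc T₁ T₂ T₃ Trpc Tr : ℤ} :
      ι n = some .store → μ p = some ⟨k, T₃⟩ →
      cacheIn κ (encOp .store) Tpc T₁ T₂ T₃ → cacheOut κ Trpc Tr →
      CStep ι φ ⟨false, κ, μ, .data ⟨p, T₁⟩ :: .data ⟨m, T₂⟩ :: σ, ⟨n, Tpc⟩⟩ none
                ⟨false, κ, updC μ p ⟨m, Tr⟩, σ, ⟨n + 1, Trpc⟩⟩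
  | jumpH {κ μ : ℤ → Option CAtom} {σ : List CStkElt} {n n' Tpc T₁ Trpc Tr : ℤ} :
      ι n = some .jump → cacheIn κ (encOp .jump) Tpc T₁ TD TD → cacheOut κ Trpc Tr →
      CStep ι φ ⟨false, κ, μ, .data ⟨n', T₁⟩ :: σ, ⟨n, Tpc⟩⟩ none
                ⟨false, κ, μ, σ, ⟨n', Trpc⟩⟩
  | bnzH {κ μ : ℤ → Option CAtom} {σ : List CStkElt} {n m k Tpc T₁ Trpc Tr : ℤ} :
      ι n = some (.bnz k) → cacheIn κ (encOp .bnz) Tpc T₁ TD TD → cacheOut κ Trpc Tr →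
      CStep ι φ ⟨false, κ, μ, .data ⟨m, T₁⟩ :: σ, ⟨n, Tpc⟩⟩ none
                ⟨false, κ, μ, σ, ⟨n + (if m = 0 then 1 else k), Trpc⟩⟩
  | callH {κ μ : ℤ → Option CAtom} {σ : List CStkElt} {n n' Tpc T₁ Trpc Tr : ℤ} :
      ι n = some .call → cacheIn κ (encOp .call) Tpc T₁ TD TD → cacheOut κ Trpc Tr →
      CStep ι φ ⟨false, κ, μ, .data ⟨n', T₁⟩ :: σ, ⟨n, Tpc⟩⟩ none
                ⟨false, κ, μ, .ret ⟨n + 1, Tr⟩ false :: σ, ⟨n', Trpc⟩⟩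
  | retH {κ μ : ℤ → Option CAtom} {σ : List CStkElt} {n m Tpc T₁ Trpc Tr : ℤ} :
      ι n = some .ret → cacheIn κ (encOp .ret) Tpc T₁ TD TD → cacheOut κ Trpc Tr →
      CStep ι φ ⟨false, κ, μ, .ret ⟨m, T₁⟩ false :: σ, ⟨n, Tpc⟩⟩ none
                ⟨false, κ, μ, σ, ⟨m, Trpc⟩⟩
  | outputH {κ μ : ℤ → Option CAtom} {σ : List CStkElt} {n m Tpc T₁ Trpc Tr : ℤ} :
      ι n = some .output → cacheIn κ (encOp .output) Tpc T₁ TD TD → cacheOut κ Trpc Tr →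
      CStep ι φ ⟨false, κ, μ, .data ⟨m, T₁⟩ :: σ, ⟨n, Tpc⟩⟩ (some ⟨m, Tr⟩)
                ⟨false, κ, μ, σ, ⟨n + 1, Trpc⟩⟩
  -- user mode, cache miss
  | addM {κ μ : ℤ → Option CAtom} {σ : List CStkElt} {n n₁ n₂ Tpc T₁ T₂ : ℤ} :
      ι n = some .add → ¬ cacheIn κ (encOp .add) Tpc T₁ T₂ TD →
      CStep ι φ ⟨false, κ, μ, .data ⟨n₁, T₁⟩ :: .data ⟨n₂, T₂⟩ :: σ, ⟨n, Tpc⟩⟩ none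
                ⟨true, installCache κ (encOp .add) Tpc T₁ T₂ TD, μ,
                 .ret ⟨n, Tpc⟩ false :: .data ⟨n₁, T₁⟩ :: .data ⟨n₂, T₂⟩ :: σ, ⟨0, TD⟩⟩
  | pushM {κ μ : ℤ → Option CAtom} {σ : List CStkElt} {n m Tpc : ℤ} :
      ι n = some (.push m) → ¬ cacheIn κ (encOp .push) Tpc TD TD TD →
      CStep ι φ ⟨false, κ, μ, σ, ⟨n, Tpc⟩⟩ none
                ⟨true, installCache κ (encOp .push) Tpc TD TD TD, μ,
                 .ret ⟨n, Tpc⟩ false :: σ, ⟨0, TD⟩⟩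
  | loadM {κ μ : ℤ → Option CAtom} {σ : List CStkElt} {n p m Tpc T₁ T₂ : ℤ} :
      ι n = some .load → μ p = some ⟨m, T₂⟩ →
      ¬ cacheIn κ (encOp .load) Tpc T₁ T₂ TD →
      CStep ι φ ⟨false, κ, μ, .data ⟨p, T₁⟩ :: σ, ⟨n, Tpc⟩⟩ none
                ⟨true, installCache κ (encOp .load) Tpc T₁ T₂ TD, μ,
                 .ret ⟨n, Tpc⟩ false :: .data ⟨p, T₁⟩ :: σ, ⟨0, TD⟩⟩
  | storeM {κ μ : ℤ → Option CAtom} {σ : List CStkElt} {n p m k Tpc T₁ T₂ T₃ : ℤ} :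
      ι n = some .store → μ p = some ⟨k, T₃⟩ →
      ¬ cacheIn κ (encOp .store) Tpc T₁ T₂ T₃ →
      CStep ι φ ⟨false, κ, μ, .data ⟨p, T₁⟩ :: .data ⟨m, T₂⟩ :: σ, ⟨n, Tpc⟩⟩ none
                ⟨true, installCache κ (encOp .store) Tpc T₁ T₂ T₃, μ,
                 .ret ⟨n, Tpc⟩ false :: .data ⟨p, T₁⟩ :: .data ⟨m, T₂⟩ :: σ, ⟨0, TD⟩⟩
  | jumpM {κ μ : ℤ → Option CAtom} {σ : List CStkElt} {n n' Tpc T₁ : ℤ} :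
      ι n = some .jump → ¬ cacheIn κ (encOp .jump) Tpc T₁ TD TD →
      CStep ι φ ⟨false, κ, μ, .data ⟨n', T₁⟩ :: σ, ⟨n, Tpc⟩⟩ none
                ⟨true, installCache κ (encOp .jump) Tpc T₁ TD TD, μ,
                 .ret ⟨n, Tpc⟩ false :: .data ⟨n', T₁⟩ :: σ, ⟨0, TD⟩⟩
  | bnzM {κ μ : ℤ → Option CAtom} {σ : List CStkElt} {n m k Tpc T₁ : ℤ} :
      ι n = some (.bnz k) → ¬ cacheIn κ (encOp .bnz) Tpc T₁ TD TD →
      CStep ι φ ⟨false, κ, μ, .data ⟨m, T₁⟩ :: σ, ⟨n, Tpc⟩⟩ none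
                ⟨true, installCache κ (encOp .bnz) Tpc T₁ TD TD, μ,
                 .ret ⟨n, Tpc⟩ false :: .data ⟨m, T₁⟩ :: σ, ⟨0, TD⟩⟩
  | callM {κ μ : ℤ → Option CAtom} {σ : List CStkElt} {n n' Tpc T₁ : ℤ} :
      ι n = some .call → ¬ cacheIn κ (encOp .call) Tpc T₁ TD TD →
      CStep ι φ ⟨false, κ, μ, .data ⟨n', T₁⟩ :: σ, ⟨n, Tpc⟩⟩ none
                ⟨true, installCache κ (encOp .call) Tpc T₁ TD TD, μ,
                 .ret ⟨n, Tpc⟩ false :: .data ⟨n', T₁⟩ :: σ, ⟨0, TD⟩⟩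
  | retM {κ μ : ℤ → Option CAtom} {σ : List CStkElt} {n m Tpc T₁ : ℤ} :
      ι n = some .ret → ¬ cacheIn κ (encOp .ret) Tpc T₁ TD TD →
      CStep ι φ ⟨false, κ, μ, .ret ⟨m, T₁⟩ false :: σ, ⟨n, Tpc⟩⟩ none
                ⟨true, installCache κ (encOp .ret) Tpc T₁ TD TD, μ,
                 .ret ⟨n, Tpc⟩ false :: .ret ⟨m, T₁⟩ false :: σ, ⟨0, TD⟩⟩
  | outputM {κ μ : ℤ → Option CAtom} {σ : List CStkElt} {n m Tpc T₁ : ℤ} :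
      ι n = some .output → ¬ cacheIn κ (encOp .output) Tpc T₁ TD TD →
      CStep ι φ ⟨false, κ, μ, .data ⟨m, T₁⟩ :: σ, ⟨n, Tpc⟩⟩ none
                ⟨true, installCache κ (encOp .output) Tpc T₁ TD TD, μ,
                 .ret ⟨n, Tpc⟩ false :: .data ⟨m, T₁⟩ :: σ, ⟨0, TD⟩⟩
  -- kernel mode
  | addK {κ μ : ℤ → Option CAtom} {σ : List CStkElt} {n t v₁ t₁ v₂ t₂ : ℤ} :
      φ n = some .add →
      CStep ι φ ⟨true, κ, μ, .data ⟨v₁, t₁⟩ :: .data ⟨v₂, t₂⟩ :: σ, ⟨n, t⟩⟩ none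
                ⟨true, κ, μ, .data ⟨v₁ + v₂, TD⟩ :: σ, ⟨n + 1, TD⟩⟩
  | pushK {κ μ : ℤ → Option CAtom} {σ : List CStkElt} {n m t : ℤ} :
      φ n = some (.push m) →
      CStep ι φ ⟨true, κ, μ, σ, ⟨n, t⟩⟩ none
                ⟨true, κ, μ, .data ⟨m, TD⟩ :: σ, ⟨n + 1, TD⟩⟩
  | loadK {κ μ : ℤ → Option CAtom} {σ : List CStkElt} {n p tp t : ℤ} {a : CAtom} :
      φ n = some .load → κ p = some a →
      CStep ι φ ⟨true, κ, μ, .data ⟨p, tp⟩ :: σ, ⟨n, t⟩⟩ none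
                ⟨true, κ, μ, .data a :: σ, ⟨n + 1, TD⟩⟩
  | storeK {κ μ : ℤ → Option CAtom} {σ : List CStkElt} {n p tp t : ℤ} {a : CAtom} :
      φ n = some .store →
      CStep ι φ ⟨true, κ, μ, .data ⟨p, tp⟩ :: .data a :: σ, ⟨n, t⟩⟩ none
                ⟨true, updC κ p a, μ, σ, ⟨n + 1, TD⟩⟩
  | jumpK {κ μ : ℤ → Option CAtom} {σ : List CStkElt} {n n' t' t : ℤ} :
      φ n = some .jump →
      CStep ι φ ⟨true, κ, μ, .data ⟨n', t'⟩ :: σ, ⟨n, t⟩⟩ none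
                ⟨true, κ, μ, σ, ⟨n', TD⟩⟩
  | bnzK {κ μ : ℤ → Option CAtom} {σ : List CStkElt} {n m k t' t : ℤ} :
      φ n = some (.bnz k) →
      CStep ι φ ⟨true, κ, μ, .data ⟨m, t'⟩ :: σ, ⟨n, t⟩⟩ none
                ⟨true, κ, μ, σ, ⟨n + (if m = 0 then 1 else k), TD⟩⟩
  | callK {κ μ : ℤ → Option CAtom} {σ : List CStkElt} {n n' t' t : ℤ} :
      φ n = some .call →
      CStep ι φ ⟨true, κ, μ, .data ⟨n', t'⟩ :: σ, ⟨n, t⟩⟩ none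
                ⟨true, κ, μ, .ret ⟨n + 1, TD⟩ true :: σ, ⟨n', TD⟩⟩
  | retK {κ μ : ℤ → Option CAtom} {σ : List CStkElt} {n t : ℤ} {a : CAtom} {π : Bool} :
      φ n = some .ret →
      CStep ι φ ⟨true, κ, μ, .ret a π :: σ, ⟨n, t⟩⟩ none ⟨π, κ, μ, σ, a⟩

/-! ### Structured code generators and the IFC fault handler -/

def genFalse : List Instr := [.push 0]
def genTrue : List Instr := [.push 1]
def genSkipIf (n : ℕ) : List Instr := [.bnz ((n : ℤ) + 1)]
def genSkip (n : ℕ) : List Instr := genTrue ++ genSkipIf n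
def genIf (t f : List Instr) : List Instr :=
  genSkipIf (f ++ genSkip t.length).length ++ (f ++ genSkip t.length) ++ t
def genLoadFrom (p : ℤ) : List Instr := [.push p, .load]
def genStoreAt (p : ℤ) : List Instr := [.push p, .store]
def genNot : List Instr := genIf genFalse genTrue
def genSome (c : List Instr) : List Instr := c ++ genTrue
def genNone : List Instr := genFalse

/-- Addresses of the tags in the rule cache. -/
def addrOpLabel : ℤ := 0
def addrTagPC : ℤ := 1
def addrTag1 : ℤ := 2
def addrTag2 : ℤ := 3
def addrTag3 : ℤ := 4
def addrTagRpc : ℤ := 5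
def addrTagR : ℤ := 6

/-- Compilation of label expressions, parameterized by the lattice-specific
generators `gb` (bottom) and `gj` (join). -/
def genELab (gb gj : List Instr) : LExpr → List Instr
  | .bot => gb
  | .labPC => genLoadFrom addrTagPC
  | .lab1 => genLoadFrom addrTag1
  | .lab2 => genLoadFrom addrTag2
  | .lab3 => genLoadFrom addrTag3
  | .join e₁ e₂ => genELab gb gj e₂ ++ genELab gb gj e₁ ++ gj

/-- Compilation of boolean expressions, additionally parameterized by the
lattice-specific generator `gf` (flows). -/
def genBoolE (gb gj gf : List Instr) : BExpr → List Instr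
  | .tru => genTrue
  | .flows e₁ e₂ => genELab gb gj e₂ ++ genELab gb gj e₁ ++ gf

/-- Compilation of a symbolic IFC rule. -/
def genApplyRule (gb gj gf : List Instr) (r : SRule) : List Instr :=
  genBoolE gb gj gf r.allow ++
  genIf (genSome (genELab gb gj r.rpc ++ genELab gb gj r.res)) genNone

/-- Guard generator: test whether the cache opcode equals (the encoding of) the
given opcode. -/
def genMatchOp (op : Opcode) : List Instr :=
  [.push (-(encOp op))] ++ genLoadFrom addrOpLabel ++ [.add] ++ genNot

/-- All the opcodes. -/
def opcodes : List Opcode :=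
  [.add, .output, .push, .load, .store, .jump, .bnz, .call, .ret]

/-- Nested case dispatch. -/
def genIndexedCases (genDefault : List Instr) (genGuard genBody : Opcode → List Instr) :
    List Opcode → List Instr
  | [] => genDefault
  | op :: ops => genGuard op ++ genIf (genBody op) (genIndexedCases genDefault genGuard genBody ops)

/-- First phase of the fault handler: dispatch on the opcode and apply the
corresponding symbolic rule. -/
def genComputeResults (gb gj gf : List Instr) (R : RuleTable) : List Instr :=
  genIndexedCases [] genMatchOp (fun op => genApplyRule gb gj gf (R op)) opcodes

/-- Second phase of the fault handler: store the computed result tags into the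
output part of the rule cache. -/
def genStoreResults : List Instr :=
  genIf (genStoreAt addrTagR ++ genStoreAt addrTagRpc ++ genTrue) genFalse

/-- The generated IFC fault handler. -/
def genFaultHandler (gb gj gf : List Instr) (R : RuleTable) : List Instr :=
  genComputeResults gb gj gf R ++ genStoreResults ++
  genIf [.ret] [.push (-1), .jump]

/-! ### Kernel-mode runs and Hoare triples -/

/-- `PrivSteps ι φ s₁ s₂`: the machine runs from `s₁` to `s₂`, all states
strictly preceding `s₂` being in kernel mode (all such steps are silent). -/
inductive PrivSteps (ι φ : InstrMem) : CState → CState → Prop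
  | refl (s : CState) : PrivSteps ι φ s s
  | step {s₁ s₂ s₃ : CState} :
      s₁.priv = true → CStep ι φ s₁ none s₂ → PrivSteps ι φ s₂ s₃ →
      PrivSteps ι φ s₁ s₃

/-- `codeAt φ n c`: the instruction memory `φ` contains the code sequence `c`
starting at address `n`. -/
def codeAt (φ : InstrMem) (n : ℤ) (c : List Instr) : Prop :=
  ∀ i : ℕ, i < c.length → φ (n + (i : ℤ)) = (c)[i]?

/-- Total-correctness Hoare triple for self-contained kernel code: if `φ`
contains `c` at the current pc and the kernel memory and stack satisfy `P`,
then the machine runs in kernel mode to the end of `c` with kernel memory and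
stack satisfying `Q` (the user memory is untouched). -/
def HT (c : List Instr) (P Q : (ℤ → Option CAtom) → List CStkElt → Prop) : Prop :=
  ∀ (ι φ : InstrMem) (n : ℤ) (κ μ : ℤ → Option CAtom) (σ : List CStkElt),
    codeAt φ n c → P κ σ →
    ∃ κ' σ', Q κ' σ' ∧
      PrivSteps ι φ ⟨true, κ, μ, σ, ⟨n, TD⟩⟩
                    ⟨true, κ', μ, σ', ⟨n + (c.length : ℤ), TD⟩⟩

/-! ### Concrete lattices -/

/-- A concrete lattice: an encoding of the labels of `L` as integer tags,
together with code sequences correctly implementing `⊥`, `⊔` and the test `≤`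
on encoded tags (specified by total-correctness Hoare triples in
weakest-precondition style). -/
structure ConcreteLattice (L : Type) [SemilatticeSup L] [OrderBot L] where
  Tag : L → ℤ
  Lab : ℤ → L
  labTag : ∀ l : L, Lab (Tag l) = l
  genBot : List Instr
  genJoin : List Instr
  genFlows : List Instr
  botSpec : ∀ P : (ℤ → Option CAtom) → List CStkElt → Prop,
    HT genBot (fun κ σ => P κ (.data ⟨Tag ⊥, TD⟩ :: σ)) P
  joinSpec : ∀ P : (ℤ → Option CAtom) → List CStkElt → Prop,
    HT genJoin
      (fun κ σ => ∃ (l₁ l₂ : L) (σ₀ : List CStkElt),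
        σ = .data ⟨Tag l₁, TD⟩ :: .data ⟨Tag l₂, TD⟩ :: σ₀ ∧
        P κ (.data ⟨Tag (l₁ ⊔ l₂), TD⟩ :: σ₀)) P
  flowsSpec : ∀ P : (ℤ → Option CAtom) → List CStkElt → Prop,
    HT genFlows
      (fun κ σ => ∃ (l₁ l₂ : L) (σ₀ : List CStkElt),
        σ = .data ⟨Tag l₁, TD⟩ :: .data ⟨Tag l₂, TD⟩ :: σ₀ ∧
        ∀ b : ℤ, (b ≠ 0 ↔ l₁ ≤ l₂) → P κ (.data ⟨b, TD⟩ :: σ₀)) P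

section Concrete

variable {L : Type} [SemilatticeSup L] [OrderBot L]

/-- The IFC fault handler compiled from a rule table, using the code generators
of a concrete lattice. -/
def faultHandler (CL : ConcreteLattice L) (R : RuleTable) : List Instr :=
  genFaultHandler CL.genBot CL.genJoin CL.genFlows R

/-- The kernel instruction memory consisting of exactly the compiled fault
handler, installed starting at address 0. -/
def handlerMem (CL : ConcreteLattice L) (R : RuleTable) : InstrMem :=
  fun q => if 0 ≤ q then (faultHandler CL R)[q.toNat]? else none

/-! ### The concrete machine as a generic machine, and matching relations -/

/-- Input data for the concrete machine. -/
structure CInput : Type where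
  prog : InstrMem
  args : List CAtom
  size : ℕ
  tag : ℤ

/-- The initial rule cache, holding an illegal opcode so that the first user
instruction always faults. -/
def initCache : ℤ → Option CAtom :=
  fun q => if 0 ≤ q ∧ q ≤ 6 then some ⟨if q = 0 then -1 else TD, TD⟩ else none

/-- The initial state of the concrete machine: user mode, cache initialized
with an illegal opcode, user memory of `size` copies of `0 @ tag`, stack
holding the arguments, pc `0 @ tag`. -/
def cInit (i : CInput) : InstrMem × CState :=
  (i.prog,
   ⟨false, initCache,
    fun q => if 0 ≤ q ∧ q < (i.size : ℤ) then some ⟨0, i.tag⟩ else none,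
    i.args.map .data, ⟨0, i.tag⟩⟩)

/-- The concrete machine step relation as a generic machine step, with the
user program part of the state and the kernel memory `φ` fixed. -/
def CStepP (φ : InstrMem) :
    (InstrMem × CState) → Option CAtom → (InstrMem × CState) → Prop :=
  fun s α s' => s'.1 = s.1 ∧ CStep s.1 φ s.2 α s'.2

/-- Matching of events/atoms: the concrete atom is the `Tag`-image of the
abstract one. -/
def matchAtomC (CL : ConcreteLattice L) (a : Atom L) (c : CAtom) : Prop :=
  c = ⟨a.val, CL.Tag a.lab⟩

/-- Matching of inputs: same program and memory size, tag-encoded arguments and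
initial label. -/
def matchInputC (CL : ConcreteLattice L) (i : AInput L) (ic : CInput) : Prop :=
  ic.prog = i.prog ∧
  ic.args = i.args.map (fun a => ⟨a.val, CL.Tag a.lab⟩) ∧
  ic.size = i.size ∧ ic.tag = CL.Tag i.lab

/-- Matching of stack elements: data matches data, return frames match return
frames with the user privilege bit, componentwise `Tag`-encoded. -/
inductive MatchStk (CL : ConcreteLattice L) : StkElt L → CStkElt → Prop
  | data {a : Atom L} {c : CAtom} :
      matchAtomC CL a c → MatchStk CL (.data a) (.data c)
  | ret {a : Atom L} {c : CAtom} :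
      matchAtomC CL a c → MatchStk CL (.ret a) (.ret c false)

/-- Cache consistency `𝓡 ⊢ κ`: the rule cache never lies with respect to the
rule table `R`. -/
def CacheConsistent (CL : ConcreteLattice L) (R : RuleTable)
    (κ : ℤ → Option CAtom) : Prop :=
  ∀ (op : Opcode) (Lpc L₁ L₂ L₃ : L),
    cacheIn κ (encOp op) (CL.Tag Lpc) (CL.Tag L₁) (CL.Tag L₂) (CL.Tag L₃) →
    ∃ Lrpc Lr : L, Judge R (Lpc, L₁, L₂, L₃) op Lrpc Lr ∧
      cacheOut κ (CL.Tag Lrpc) (CL.Tag Lr)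

/-- Matching of symbolic-rule-machine states and concrete states (`≈ˢᶜ`). -/
def MatchState (CL : ConcreteLattice L) (R : RuleTable)
    (qs : AState L) (cs : CState) : Prop :=
  cs.priv = false ∧
  CacheConsistent CL R cs.kmem ∧
  (∀ p, Option.Rel (matchAtomC CL) (qs.mem p) (cs.umem p)) ∧
  List.Forall₂ (MatchStk CL) qs.stk cs.stk ∧
  cs.pc = ⟨qs.pc.val, CL.Tag qs.pc.lab⟩

end Concrete


/-!
The concrete machine is compared with the symbolic rule machine for an arbitrary well-formed rule
table `R`; the abstract machine is the instance `R = RabsTable`. The rule cache only ever holds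
results of `R` (`CacheSound`), so a user step that hits in the cache is matched by one symbolic
step. A miss traps to the fault handler, verified in a weakest-precondition Hoare logic for kernel
code: it either stores the rule's result in the cache and returns to the faulting user state, which
the symbolic machine matches by not moving, or it halts.
-/

theorem Traces.mono {S E : Type} {step step' : S → Option E → S → Prop}
    (h : ∀ s α s', step s α s' → step' s α s') {s : S} {t : List E} {s' : S}
    (ht : Traces step s t s') : Traces step' s t s' := by
  induction ht with
  | nil s => exact .nil s
  | event hs _ ih => exact .event (h _ _ _ hs) ih
  | silent hs _ ih => exact .silent (h _ _ _ hs) ih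

def IsSimulation {S₁ E₁ I₁ S₂ E₂ I₂ : Type} (M₁ : Machine S₁ E₁ I₁) (M₂ : Machine S₂ E₂ I₂)
    (Rs : S₁ → S₂ → Prop) (Re : E₁ → E₂ → Prop) : Prop :=
  ∀ s₁ s₂ α s₂', Rs s₁ s₂ → M₂.step s₂ α s₂' →
    (α = none ∧ Rs s₁ s₂') ∨
      ∃ α₁ s₁', M₁.step s₁ α₁ s₁' ∧ Option.Rel Re α₁ α ∧ Rs s₁' s₂'

theorem IsSimulation.stateRefinement {S₁ E₁ I₁ S₂ E₂ I₂ : Type} {M₁ : Machine S₁ E₁ I₁}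
    {M₂ : Machine S₂ E₂ I₂} {Rs : S₁ → S₂ → Prop} {Re : E₁ → E₂ → Prop}
    (hsim : IsSimulation M₁ M₂ Rs Re) : StateRefinement M₁ M₂ Rs Re := by
  rintro s₁ s₂ t₂ hs ⟨s₂', ht⟩
  induction ht generalizing s₁ with
  | nil => exact ⟨[], ⟨s₁, .nil s₁⟩, .nil⟩
  | event hstep _ ih =>
    rcases hsim _ _ _ _ hs hstep with ⟨h, -⟩ | ⟨α₁, s₁', hstep₁, hα, hs'⟩
    · cases h
    · obtain ⟨t₁, ⟨s, ht₁⟩, hrel⟩ := ih s₁' hs'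
      cases hα with
      | some he => exact ⟨_ :: t₁, ⟨s, .event hstep₁ ht₁⟩, .cons he hrel⟩
  | silent hstep _ ih =>
    rcases hsim _ _ _ _ hs hstep with ⟨-, hs'⟩ | ⟨α₁, s₁', hstep₁, hα, hs'⟩
    · exact ih s₁ hs'
    · obtain ⟨t₁, ⟨s, ht₁⟩, hrel⟩ := ih s₁' hs'
      cases hα with
      | none => exact ⟨t₁, ⟨s, .silent hstep₁ ht₁⟩, hrel⟩

theorem StateRefinement.refinement {S₁ E₁ I₁ S₂ E₂ I₂ : Type} {M₁ : Machine S₁ E₁ I₁}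
    {M₂ : Machine S₂ E₂ I₂} {Rs : S₁ → S₂ → Prop} {Ri : I₁ → I₂ → Prop} {Re : E₁ → E₂ → Prop}
    (h : StateRefinement M₁ M₂ Rs Re) (hinit : ∀ i₁ i₂, Ri i₁ i₂ → Rs (M₁.init i₁) (M₂.init i₂)) :
    Refinement M₁ M₂ Ri Re :=
  fun i₁ i₂ t₂ hi ht => h _ _ t₂ (hinit i₁ i₂ hi) ht

theorem Refinement.mono_left {S₁ E₁ I₁ S₂ E₂ I₂ : Type} {M₁ M₁' : Machine S₁ E₁ I₁}
    {M₂ : Machine S₂ E₂ I₂} {Ri : I₁ → I₂ → Prop} {Re : E₁ → E₂ → Prop}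
    (h : Refinement M₁ M₂ Ri Re) (hstep : ∀ s α s', M₁.step s α s' → M₁'.step s α s')
    (hinit : M₁'.init = M₁.init) : Refinement M₁' M₂ Ri Re := by
  intro i₁ i₂ t₂ hi ht
  obtain ⟨t₁, ⟨s, ht₁⟩, hrel⟩ := h i₁ i₂ t₂ hi ht
  exact ⟨t₁, ⟨s, hinit ▸ ht₁.mono hstep⟩, hrel⟩

section Symbolic

variable {L : Type} [SemilatticeSup L] [OrderBot L]

def QMachine (R : RuleTable) : Machine (InstrMem × AState L) (Atom L) (AInput L) :=
  ⟨QStepP R, aInit⟩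

theorem AStep.of_qStep_rabsTable {ι : InstrMem} {s s' : AState L} {α : Option (Atom L)}
    (h : QStep RabsTable ι s α s') : AStep ι s α s' := by
  cases h <;> obtain ⟨hallow, rfl, rfl⟩ := ‹Judge _ _ _ _ _› <;> constructor <;> assumption

end Symbolic

/- `Opcode.arity` counts the labels an instruction reads besides the pc label. On a fault, an
instruction of arity `k` writes `TD` into the cache input slots `i > k`, and the symbolic machine
evaluates its rule with `⊥` there; a well-formed rule table never reads those slots. -/
def Opcode.arity : Opcode → ℕ
  | .push => 0
  | .jump | .bnz | .call | .ret | .output => 1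
  | .add | .load => 2
  | .store => 3

def LExpr.ReadsWithin (k : ℕ) : LExpr → Prop
  | .bot | .labPC => True
  | .lab1 => 1 ≤ k
  | .lab2 => 2 ≤ k
  | .lab3 => 3 ≤ k
  | .join e₁ e₂ => e₁.ReadsWithin k ∧ e₂.ReadsWithin k

def BExpr.ReadsWithin (k : ℕ) : BExpr → Prop
  | .tru => True
  | .flows e₁ e₂ => e₁.ReadsWithin k ∧ e₂.ReadsWithin k

def SRule.ReadsWithin (k : ℕ) (r : SRule) : Prop :=
  r.allow.ReadsWithin k ∧ r.rpc.ReadsWithin k ∧ r.res.ReadsWithin k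

def WellFormedTable (R : RuleTable) : Prop :=
  ∀ op, (R op).ReadsWithin op.arity

theorem wellFormedTable_rabsTable : WellFormedTable RabsTable := by
  intro op
  cases op <;> simp [RabsTable, SRule.ReadsWithin, BExpr.ReadsWithin, LExpr.ReadsWithin,
    Opcode.arity]

theorem PrivSteps.trans {ι φ : InstrMem} {s₁ s₂ s₃ : CState} (h₁ : PrivSteps ι φ s₁ s₂)
    (h₂ : PrivSteps ι φ s₂ s₃) : PrivSteps ι φ s₁ s₃ := by
  induction h₁ with
  | refl => exact h₂
  | step hp hs _ ih => exact .step hp hs (ih h₂)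

theorem codeAt_append {φ : InstrMem} {n : ℤ} {c₁ c₂ : List Instr} (h : codeAt φ n (c₁ ++ c₂)) :
    codeAt φ n c₁ ∧ codeAt φ (n + c₁.length) c₂ := by
  refine ⟨fun i hi => ?_, fun i hi => ?_⟩
  · rw [h i (by rw [List.length_append]; omega), List.getElem?_append_left hi]
  · have := h (c₁.length + i) (by rw [List.length_append]; omega)
    rwa [List.getElem?_append_right (by omega), Nat.add_sub_cancel_left, Nat.cast_add,
      ← add_assoc] at this

theorem codeAt_cons {φ : InstrMem} {n : ℤ} {i : Instr} {c : List Instr}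
    (h : codeAt φ n (i :: c)) : φ n = some i ∧ codeAt φ (n + 1) c := by
  obtain ⟨hi, hc⟩ := codeAt_append (c₁ := [i]) h
  exact ⟨by simpa using hi 0 (by simp), by simpa using hc⟩

theorem genIf_eq (t f : List Instr) :
    genIf t f = .bnz (f.length + 3) :: (f ++ .push 1 :: .bnz (t.length + 1) :: t) := by
  simp [genIf, genSkipIf, genSkip, genTrue, add_comm, add_left_comm]

theorem encOp_injective : Function.Injective encOp := by
  intro a b; cases a <;> cases b <;> simp [encOp]

abbrev KAssn : Type := (ℤ → Option CAtom) → List CStkElt → Prop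

def setCacheOut (κ : ℤ → Option CAtom) (Trpc Tr : ℤ) : ℤ → Option CAtom :=
  updC (updC κ addrTagR ⟨Tr, TD⟩) addrTagRpc ⟨Trpc, TD⟩

namespace HT

theorem conseq {c : List Instr} {P P' Q : KAssn} (h : HT c P Q) (hP : ∀ κ σ, P' κ σ → P κ σ) :
    HT c P' Q := by
  intro ι φ n κ μ σ hc hp
  exact h ι φ n κ μ σ hc (hP _ _ hp)

theorem append {c₁ c₂ : List Instr} {P Q R : KAssn} (h₁ : HT c₁ P Q) (h₂ : HT c₂ Q R) :
    HT (c₁ ++ c₂) P R := by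
  intro ι φ n κ μ σ hc hp
  obtain ⟨hc₁, hc₂⟩ := codeAt_append hc
  obtain ⟨κ₁, σ₁, hq, hr₁⟩ := h₁ ι φ n κ μ σ hc₁ hp
  obtain ⟨κ₂, σ₂, hr, hr₂⟩ := h₂ ι φ _ κ₁ μ σ₁ hc₂ hq
  refine ⟨κ₂, σ₂, hr, ?_⟩
  rw [List.length_append, Nat.cast_add, ← add_assoc]
  exact hr₁.trans hr₂

theorem single {i : Instr} {P Q : KAssn}
    (h : ∀ ι φ n κ μ σ, φ n = some i → P κ σ →
      ∃ κ' σ', Q κ' σ' ∧ CStep ι φ ⟨true, κ, μ, σ, ⟨n, TD⟩⟩ none ⟨true, κ', μ, σ', ⟨n + 1, TD⟩⟩) :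
    HT [i] P Q := by
  intro ι φ n κ μ σ hc hp
  obtain ⟨κ', σ', hq, hs⟩ := h ι φ n κ μ σ (codeAt_cons hc).1 hp
  exact ⟨κ', σ', hq, .step rfl hs (by simpa using .refl _)⟩

theorem push (m : ℤ) (P : KAssn) : HT [.push m] (fun κ σ => P κ (.data ⟨m, TD⟩ :: σ)) P :=
  single fun _ _ _ _ _ _ hi hp => ⟨_, _, hp, .pushK hi⟩

theorem add (P : KAssn) :
    HT [.add] (fun κ σ => ∃ v₁ t₁ v₂ t₂ σ₀, σ = .data ⟨v₁, t₁⟩ :: .data ⟨v₂, t₂⟩ :: σ₀ ∧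
      P κ (.data ⟨v₁ + v₂, TD⟩ :: σ₀)) P :=
  single fun _ _ _ _ _ _ hi ⟨_, _, _, _, _, hσ, hp⟩ => ⟨_, _, hp, hσ ▸ .addK hi⟩

theorem load (P : KAssn) :
    HT [.load] (fun κ σ => ∃ p tp σ₀ a, σ = .data ⟨p, tp⟩ :: σ₀ ∧ κ p = some a ∧
      P κ (.data a :: σ₀)) P :=
  single fun _ _ _ _ _ _ hi ⟨_, _, _, _, hσ, ha, hp⟩ => ⟨_, _, hp, hσ ▸ .loadK hi ha⟩

theorem store (P : KAssn) :
    HT [.store] (fun κ σ => ∃ p tp a σ₀, σ = .data ⟨p, tp⟩ :: .data a :: σ₀ ∧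
      P (updC κ p a) σ₀) P :=
  single fun _ _ _ _ _ _ hi ⟨_, _, _, _, hσ, hp⟩ => ⟨_, _, hp, hσ ▸ .storeK hi⟩

theorem ite {t f : List Instr} {Pt Pf Q : KAssn} (ht : HT t Pt Q) (hf : HT f Pf Q) :
    HT (genIf t f) (fun κ σ => ∃ b tb σ₀, σ = .data ⟨b, tb⟩ :: σ₀ ∧
      (b ≠ 0 ∧ Pt κ σ₀ ∨ b = 0 ∧ Pf κ σ₀)) Q := by
  rintro ι φ n κ μ _ hc ⟨b, tb, σ, rfl, hb⟩
  rw [genIf_eq] at hc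
  obtain ⟨hbnz, hc⟩ := codeAt_cons hc
  obtain ⟨hcf, hc⟩ := codeAt_append hc
  obtain ⟨hpush, hc⟩ := codeAt_cons hc
  obtain ⟨hbnz', hct⟩ := codeAt_cons hc
  have hlen : ((genIf t f).length : ℤ) = f.length + 3 + t.length := by
    rw [genIf_eq]; simp only [List.length_cons, List.length_append]; push_cast; ring
  rcases hb with ⟨hb, hpt⟩ | ⟨rfl, hpf⟩
  · obtain ⟨κ', σ', hq, hrun⟩ := ht ι φ (n + (f.length + 3)) κ μ σ
      (by rwa [show n + (f.length + 3) = n + 1 + f.length + 1 + 1 by ring]) hpt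
    refine ⟨κ', σ', hq, .step rfl (.bnzK hbnz) ?_⟩
    rwa [if_neg hb, hlen, ← add_assoc n _ (t.length : ℤ)]
  · obtain ⟨κ', σ', hq, hrun⟩ := hf ι φ _ κ μ σ hcf hpf
    refine ⟨κ', σ', hq, .step rfl (.bnzK hbnz) ?_⟩
    rw [if_pos rfl]
    refine hrun.trans (.step rfl (.pushK hpush) (.step rfl (.bnzK hbnz') ?_))
    rw [if_neg one_ne_zero, hlen, show n + 1 + f.length + 1 + (t.length + 1) =
      n + (f.length + 3 + t.length) by ring]
    exact .refl _

theorem loadFrom (p : ℤ) (P : KAssn) :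
    HT (genLoadFrom p) (fun κ σ => ∃ a, κ p = some a ∧ P κ (.data a :: σ)) P :=
  (push p _).append (load P) |>.conseq fun _ σ ⟨a, ha, hp⟩ => ⟨p, TD, σ, a, rfl, ha, hp⟩

theorem storeAt (p : ℤ) (P : KAssn) :
    HT (genStoreAt p) (fun κ σ => ∃ a σ₀, σ = .data a :: σ₀ ∧ P (updC κ p a) σ₀) P :=
  (push p _).append (store P) |>.conseq fun _ _ ⟨a, σ₀, hσ, hp⟩ => ⟨p, TD, a, σ₀, hσ ▸ rfl, hp⟩

theorem not (P : KAssn) :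
    HT genNot (fun κ σ => ∃ b tb σ₀, σ = .data ⟨b, tb⟩ :: σ₀ ∧
      ∀ b' : ℤ, (b' ≠ 0 ↔ b = 0) → P κ (.data ⟨b', TD⟩ :: σ₀)) P := by
  refine (ite (push 0 P) (push 1 P)).conseq ?_
  rintro κ _ ⟨b, tb, σ, rfl, hp⟩
  refine ⟨b, tb, σ, rfl, ?_⟩
  by_cases hb : b = 0
  · exact .inr ⟨hb, hp 1 (by simp [hb])⟩
  · exact .inl ⟨hb, hp 0 (by simp [hb])⟩

theorem matchOp (op : Opcode) (P : KAssn) :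
    HT (genMatchOp op) (fun κ σ => ∃ v tv, κ addrOpLabel = some ⟨v, tv⟩ ∧
      ∀ b : ℤ, (b ≠ 0 ↔ v = encOp op) → P κ (.data ⟨b, TD⟩ :: σ)) P := by
  refine ((((push _ _).append (loadFrom _ _)).append (add _)).append (not P)).conseq ?_
  rintro κ σ ⟨v, tv, hv, hp⟩
  exact ⟨_, hv, v, tv, _, TD, σ, rfl, _, TD, σ, rfl, fun b hb => hp b (by omega)⟩

theorem indexedCases {body : Opcode → List Instr} {op : Opcode} {P Q : KAssn}
    (hbody : HT (body op) P Q) {ops : List Opcode} (hop : op ∈ ops) :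
    HT (genIndexedCases [] genMatchOp body ops)
      (fun κ σ => κ addrOpLabel = some ⟨encOp op, TD⟩ ∧ P κ σ) Q := by
  induction ops with
  | nil => simp at hop
  | cons op₀ ops ih =>
    have hthen : HT (body op₀) (fun κ σ => op = op₀ ∧ P κ σ) Q := by
      rintro ι φ n κ μ σ hc ⟨rfl, hp⟩
      exact hbody ι φ n κ μ σ hc hp
    have helse : HT (genIndexedCases [] genMatchOp body ops)
        (fun κ σ => op ≠ op₀ ∧ κ addrOpLabel = some ⟨encOp op, TD⟩ ∧ P κ σ) Q := by
      intro ι φ n κ μ σ hc ⟨hne, hp⟩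
      exact ih (List.mem_of_ne_of_mem hne hop) ι φ n κ μ σ hc hp
    refine ((matchOp op₀ _).append (ite hthen helse)).conseq ?_
    rintro κ σ ⟨hκ, hp⟩
    refine ⟨_, TD, hκ, fun b hb => ⟨b, TD, σ, rfl, ?_⟩⟩
    by_cases h : op = op₀
    · exact .inl ⟨hb.mpr (congrArg encOp h), h, hp⟩
    · exact .inr ⟨by_contra fun hb0 => h (encOp_injective (hb.mp hb0)), h, hκ, hp⟩

theorem storeResults (P : KAssn) :
    HT genStoreResults
      (fun κ σ => ∃ b tb σ₀, σ = .data ⟨b, tb⟩ :: σ₀ ∧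
        (b ≠ 0 ∧ (∃ Tr Trpc σ₁, σ₀ = .data ⟨Tr, TD⟩ :: .data ⟨Trpc, TD⟩ :: σ₁ ∧
            P (setCacheOut κ Trpc Tr) (.data ⟨1, TD⟩ :: σ₁)) ∨
          b = 0 ∧ P κ (.data ⟨0, TD⟩ :: σ₀))) P := by
  refine ite ((storeAt _ _).append (storeAt _ _) |>.append (push 1 P) |>.conseq ?_) (push 0 P)
  rintro κ _ ⟨Tr, Trpc, σ, rfl, hp⟩
  exact ⟨_, _, rfl, _, σ, rfl, hp⟩

end HT

section Handler

variable {L : Type} [SemilatticeSup L] [OrderBot L] (CL : ConcreteLattice L)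

def SlotsCached (κ : ℤ → Option CAtom) (ρ : L × L × L × L) : LExpr → Prop
  | .bot => True
  | .labPC => κ addrTagPC = some ⟨CL.Tag ρ.1, TD⟩
  | .lab1 => κ addrTag1 = some ⟨CL.Tag ρ.2.1, TD⟩
  | .lab2 => κ addrTag2 = some ⟨CL.Tag ρ.2.2.1, TD⟩
  | .lab3 => κ addrTag3 = some ⟨CL.Tag ρ.2.2.2, TD⟩
  | .join e₁ e₂ => SlotsCached κ ρ e₁ ∧ SlotsCached κ ρ e₂

def SlotsCachedB (κ : ℤ → Option CAtom) (ρ : L × L × L × L) : BExpr → Prop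
  | .tru => True
  | .flows e₁ e₂ => SlotsCached CL κ ρ e₁ ∧ SlotsCached CL κ ρ e₂

def SlotsCachedRule (κ : ℤ → Option CAtom) (ρ : L × L × L × L) (r : SRule) : Prop :=
  SlotsCachedB CL κ ρ r.allow ∧ SlotsCached CL κ ρ r.rpc ∧ SlotsCached CL κ ρ r.res

namespace HT

theorem labelExpr (ρ : L × L × L × L) (e : LExpr) (P : KAssn) :
    HT (genELab CL.genBot CL.genJoin e)
      (fun κ σ => SlotsCached CL κ ρ e ∧ P κ (.data ⟨CL.Tag (evalL ρ e), TD⟩ :: σ)) P := by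
  induction e generalizing P with
  | bot => exact (CL.botSpec P).conseq fun _ _ h => h.2
  | labPC | lab1 | lab2 | lab3 => exact (loadFrom _ P).conseq fun _ _ h => ⟨_, h⟩
  | join e₁ e₂ ih₁ ih₂ =>
    refine ((ih₂ _).append (ih₁ _) |>.append (CL.joinSpec P)).conseq ?_
    rintro κ σ ⟨⟨h₁, h₂⟩, hp⟩
    exact ⟨h₂, h₁, _, _, σ, rfl, hp⟩

theorem boolExpr (ρ : L × L × L × L) (b : BExpr) (P : KAssn) :
    HT (genBoolE CL.genBot CL.genJoin CL.genFlows b)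
      (fun κ σ => SlotsCachedB CL κ ρ b ∧
        ∀ v : ℤ, (v ≠ 0 ↔ evalB ρ b) → P κ (.data ⟨v, TD⟩ :: σ)) P := by
  cases b with
  | tru => exact (push 1 P).conseq fun _ _ h => h.2 1 (by simp [evalB])
  | flows e₁ e₂ =>
    refine ((labelExpr CL ρ e₂ _).append (labelExpr CL ρ e₁ _) |>.append (CL.flowsSpec P)).conseq ?_
    rintro κ σ ⟨⟨h₁, h₂⟩, hp⟩
    exact ⟨h₂, h₁, _, _, σ, rfl, hp⟩

theorem applyRule (ρ : L × L × L × L) (r : SRule) (P : KAssn) :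
    HT (genApplyRule CL.genBot CL.genJoin CL.genFlows r)
      (fun κ σ => SlotsCachedRule CL κ ρ r ∧
        (evalB ρ r.allow → P κ (.data ⟨1, TD⟩ :: .data ⟨CL.Tag (evalL ρ r.res), TD⟩ ::
          .data ⟨CL.Tag (evalL ρ r.rpc), TD⟩ :: σ)) ∧
        (¬ evalB ρ r.allow → P κ (.data ⟨0, TD⟩ :: σ))) P := by
  have hsome := (labelExpr CL ρ r.rpc _).append (labelExpr CL ρ r.res _) |>.append (push 1 P)
  refine ((boolExpr CL ρ r.allow _).append (ite hsome (push 0 P))).conseq ?_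
  rintro κ σ ⟨⟨hallow, hrpc, hres⟩, hyes, hno⟩
  refine ⟨hallow, fun v hv => ⟨v, TD, σ, rfl, ?_⟩⟩
  by_cases h : v = 0
  · exact .inr ⟨h, hno (by rw [← hv]; simp [h])⟩
  · exact .inl ⟨h, hrpc, hres, hyes (hv.mp h)⟩

theorem computeAndStoreResults (R : RuleTable) (op : Opcode) (ρ : L × L × L × L)
    (P : KAssn) :
    HT (genComputeResults CL.genBot CL.genJoin CL.genFlows R ++ genStoreResults)
      (fun κ σ => κ addrOpLabel = some ⟨encOp op, TD⟩ ∧ SlotsCachedRule CL κ ρ (R op) ∧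
        (evalB ρ (R op).allow → P (setCacheOut κ (CL.Tag (evalL ρ (R op).rpc))
          (CL.Tag (evalL ρ (R op).res))) (.data ⟨1, TD⟩ :: σ)) ∧
        (¬ evalB ρ (R op).allow → P κ (.data ⟨0, TD⟩ :: σ))) P := by
  have hop : op ∈ opcodes := by cases op <;> simp [opcodes]
  refine ((indexedCases (applyRule CL ρ (R op) _) hop).append (storeResults P)).conseq ?_
  rintro κ σ ⟨hκ, hslots, hyes, hno⟩
  exact ⟨hκ, hslots, fun h => ⟨1, TD, _, rfl, .inl ⟨one_ne_zero, _, _, σ, rfl, hyes h⟩⟩,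
    fun h => ⟨0, TD, σ, rfl, .inr ⟨rfl, hno h⟩⟩⟩

end HT

theorem codeAt_handlerMem (R : RuleTable) : codeAt (handlerMem CL R) 0 (faultHandler CL R) := by
  intro i _
  simp [handlerMem]

theorem privSteps_handlerMem (R : RuleTable) (op : Opcode) (ρ : L × L × L × L) (ι : InstrMem)
    (κ μ : ℤ → Option CAtom) (σ : List CStkElt) (pc : CAtom)
    (hop : κ addrOpLabel = some ⟨encOp op, TD⟩) (hslots : SlotsCachedRule CL κ ρ (R op)) :
    (evalB ρ (R op).allow → PrivSteps ι (handlerMem CL R) ⟨true, κ, μ, .ret pc false :: σ, ⟨0, TD⟩⟩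
      ⟨false, setCacheOut κ (CL.Tag (evalL ρ (R op).rpc)) (CL.Tag (evalL ρ (R op).res)), μ, σ,
        pc⟩) ∧
    (¬ evalB ρ (R op).allow → PrivSteps ι (handlerMem CL R)
      ⟨true, κ, μ, .ret pc false :: σ, ⟨0, TD⟩⟩ ⟨true, κ, μ, .ret pc false :: σ, ⟨-1, TD⟩⟩) := by
  obtain ⟨hbody, htail⟩ := codeAt_append (codeAt_handlerMem CL R)
  set m : ℤ := 0 + (genComputeResults CL.genBot CL.genJoin CL.genFlows R ++
    genStoreResults).length
  have htail' : codeAt (handlerMem CL R) m [.bnz 5, .push (-1), .jump, .push 1, .bnz 2, .ret] :=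
    htail
  have h₀ : handlerMem CL R m = some (.bnz 5) := by simpa using htail' 0
  have h₁ : handlerMem CL R (m + 1) = some (.push (-1)) := by simpa using htail' 1
  have h₂ : handlerMem CL R (m + 1 + 1) = some .jump := by
    rw [add_assoc]; exact htail' 2 (by simp)
  have h₅ : handlerMem CL R (m + 5) = some .ret := htail' 5 (by simp)
  have run : ∀ tgt,
      (evalB ρ (R op).allow → PrivSteps ι (handlerMem CL R)
        ⟨true, setCacheOut κ (CL.Tag (evalL ρ (R op).rpc)) (CL.Tag (evalL ρ (R op).res)), μ,
          .data ⟨1, TD⟩ :: .ret pc false :: σ, ⟨m, TD⟩⟩ tgt) →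
      (¬ evalB ρ (R op).allow → PrivSteps ι (handlerMem CL R)
        ⟨true, κ, μ, .data ⟨0, TD⟩ :: .ret pc false :: σ, ⟨m, TD⟩⟩ tgt) →
      PrivSteps ι (handlerMem CL R) ⟨true, κ, μ, .ret pc false :: σ, ⟨0, TD⟩⟩ tgt := by
    intro tgt hyes hno
    obtain ⟨κ', σ', hrest, hrun⟩ := HT.computeAndStoreResults CL R op ρ
      (fun κ' σ' => PrivSteps ι (handlerMem CL R) ⟨true, κ', μ, σ', ⟨m, TD⟩⟩ tgt)
      ι (handlerMem CL R) 0 κ μ _ hbody ⟨hop, hslots, hyes, hno⟩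
    exact hrun.trans hrest
  refine ⟨fun h => run _ (fun _ => ?_) (absurd h), fun h => run _ (absurd · h) (fun _ => ?_)⟩
  · refine .step rfl (.bnzK h₀) ?_
    rw [if_neg one_ne_zero]
    exact .step rfl (.retK h₅) (.refl _)
  · refine .step rfl (.bnzK h₀) ?_
    rw [if_pos rfl]
    exact .step rfl (.pushK h₁) (.step rfl (.jumpK h₂) (.refl _))

end Handler

theorem CStep.deterministic_of_priv {ι φ : InstrMem} {s s₁ s₂ : CState} {α₁ α₂ : Option CAtom}
    (hp : s.priv = true) (h₁ : CStep ι φ s α₁ s₁) (h₂ : CStep ι φ s α₂ s₂) :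
    α₁ = α₂ ∧ s₁ = s₂ := by
  obtain ⟨priv, κ, μ, σ, pc⟩ := s
  subst hp
  cases h₁ <;> cases h₂ <;> simp_all

def Halted (ι φ : InstrMem) (s : CState) : Prop :=
  ∀ α s', ¬ CStep ι φ s α s'

theorem halted_handlerMem {L : Type} [SemilatticeSup L] [OrderBot L] (CL : ConcreteLattice L)
    (R : RuleTable) (ι : InstrMem) (κ μ : ℤ → Option CAtom) (σ : List CStkElt) (t : ℤ) :
    Halted ι (handlerMem CL R) ⟨true, κ, μ, σ, ⟨-1, t⟩⟩ := by
  intro α s' h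
  have hnone : handlerMem CL R (-1) = none := by simp [handlerMem]
  cases h <;> simp_all

section Cache

variable {L : Type} [SemilatticeSup L] [OrderBot L] (CL : ConcreteLattice L)

theorem ConcreteLattice.tag_injective : Function.Injective CL.Tag :=
  Function.LeftInverse.injective CL.labTag

def slotTag (k i : ℕ) (l : L) : ℤ := if i ≤ k then CL.Tag l else TD

def slotLab (k i : ℕ) (l : L) : L := if i ≤ k then l else ⊥

theorem slotLab_eq_of_slotTag_eq {k i : ℕ} {l l' : L} (h : slotTag CL k i l = slotTag CL k i l') :
    slotLab k i l = slotLab k i l' := by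
  unfold slotTag at h
  unfold slotLab
  split_ifs at h ⊢
  exacts [CL.tag_injective h, rfl]

def faultLabels (op : Opcode) (Lpc L₁ L₂ L₃ : L) : L × L × L × L :=
  (Lpc, slotLab op.arity 1 L₁, slotLab op.arity 2 L₂, slotLab op.arity 3 L₃)

def faultCache (κ : ℤ → Option CAtom) (op : Opcode) (Lpc L₁ L₂ L₃ : L) : ℤ → Option CAtom :=
  installCache κ (encOp op) (CL.Tag Lpc) (slotTag CL op.arity 1 L₁) (slotTag CL op.arity 2 L₂)
    (slotTag CL op.arity 3 L₃)

/-- `CacheConsistent` would ask this for four `Tag`-encoded input labels, but a fault writes `TD`,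
which need not be a tag, into the unused slots. -/
def CacheSound (R : RuleTable) (κ : ℤ → Option CAtom) : Prop :=
  ∀ op Lpc L₁ L₂ L₃, cacheIn κ (encOp op) (CL.Tag Lpc) (slotTag CL op.arity 1 L₁)
      (slotTag CL op.arity 2 L₂) (slotTag CL op.arity 3 L₃) →
    ∃ Lrpc Lr, Judge R (faultLabels op Lpc L₁ L₂ L₃) op Lrpc Lr ∧
      cacheOut κ (CL.Tag Lrpc) (CL.Tag Lr)

variable {CL}

theorem CacheSound.hit {R : RuleTable} {κ : ℤ → Option CAtom} (hκ : CacheSound CL R κ)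
    {op : Opcode} {Lpc L₁ L₂ L₃ : L} {Trpc Tr : ℤ}
    (hin : cacheIn κ (encOp op) (CL.Tag Lpc) (slotTag CL op.arity 1 L₁)
      (slotTag CL op.arity 2 L₂) (slotTag CL op.arity 3 L₃))
    (hout : cacheOut κ Trpc Tr) :
    ∃ Lrpc Lr, Judge R (faultLabels op Lpc L₁ L₂ L₃) op Lrpc Lr ∧
      Trpc = CL.Tag Lrpc ∧ Tr = CL.Tag Lr := by
  obtain ⟨Lrpc, Lr, hJ, hrpc, hr⟩ := hκ op Lpc L₁ L₂ L₃ hin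
  cases hout.1.symm.trans hrpc
  cases hout.2.symm.trans hr
  exact ⟨Lrpc, Lr, hJ, rfl, rfl⟩

theorem cacheSound_initCache (R : RuleTable) : CacheSound CL R initCache := by
  rintro op _ _ _ _ ⟨h₀, -⟩
  cases op <;> simp [initCache, encOp, TD] at h₀

theorem cacheSound_setCacheOut_faultCache {R : RuleTable} (κ : ℤ → Option CAtom) {op : Opcode}
    {Lpc L₁ L₂ L₃ : L} (hallow : evalB (faultLabels op Lpc L₁ L₂ L₃) (R op).allow) :
    CacheSound CL R (setCacheOut (faultCache CL κ op Lpc L₁ L₂ L₃)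
      (CL.Tag (evalL (faultLabels op Lpc L₁ L₂ L₃) (R op).rpc))
      (CL.Tag (evalL (faultLabels op Lpc L₁ L₂ L₃) (R op).res))) := by
  rintro op' Lpc' L₁' L₂' L₃' ⟨h₀, hpc, h₁, h₂, h₃⟩
  simp [setCacheOut, faultCache, installCache, updC, addrTagR, addrTagRpc] at h₀ hpc h₁ h₂ h₃
  obtain rfl := encOp_injective h₀
  have hlabels : faultLabels op Lpc' L₁' L₂' L₃' = faultLabels op Lpc L₁ L₂ L₃ := by
    simp only [faultLabels, CL.tag_injective hpc, slotLab_eq_of_slotTag_eq CL h₁,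
      slotLab_eq_of_slotTag_eq CL h₂, slotLab_eq_of_slotTag_eq CL h₃]
  rw [hlabels]
  exact ⟨_, _, ⟨hallow, rfl, rfl⟩, by simp [cacheOut, setCacheOut, updC, addrTagR, addrTagRpc]⟩

theorem slotsCached_faultCache (κ : ℤ → Option CAtom) (op : Opcode) (Lpc L₁ L₂ L₃ : L)
    {e : LExpr} (he : e.ReadsWithin op.arity) :
    SlotsCached CL (faultCache CL κ op Lpc L₁ L₂ L₃) (faultLabels op Lpc L₁ L₂ L₃) e := by
  induction e with
  | join e₁ e₂ ih₁ ih₂ => exact ⟨ih₁ he.1, ih₂ he.2⟩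
  | _ =>
    simp_all [SlotsCached, LExpr.ReadsWithin, faultCache, faultLabels, installCache, slotTag,
      slotLab, addrTagPC, addrTag1, addrTag2, addrTag3]

theorem slotsCachedRule_faultCache {R : RuleTable} (hR : WellFormedTable R)
    (κ : ℤ → Option CAtom) (op : Opcode) (Lpc L₁ L₂ L₃ : L) :
    SlotsCachedRule CL (faultCache CL κ op Lpc L₁ L₂ L₃) (faultLabels op Lpc L₁ L₂ L₃) (R op) := by
  obtain ⟨hallow, hrpc, hres⟩ := hR op
  refine ⟨?_, slotsCached_faultCache κ op Lpc L₁ L₂ L₃ hrpc,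
    slotsCached_faultCache κ op Lpc L₁ L₂ L₃ hres⟩
  cases h : (R op).allow with
  | tru => trivial
  | flows e₁ e₂ =>
    rw [h] at hallow
    exact ⟨slotsCached_faultCache κ op Lpc L₁ L₂ L₃ hallow.1,
      slotsCached_faultCache κ op Lpc L₁ L₂ L₃ hallow.2⟩

theorem handler_resolves_fault {R : RuleTable} (hR : WellFormedTable R) (ι : InstrMem)
    (κ μ : ℤ → Option CAtom) (σ : List CStkElt) (pc : CAtom) (op : Opcode) (Lpc L₁ L₂ L₃ : L) :
    ∃ c, PrivSteps ι (handlerMem CL R)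
        ⟨true, faultCache CL κ op Lpc L₁ L₂ L₃, μ, .ret pc false :: σ, ⟨0, TD⟩⟩ c ∧
      ((∃ κ', CacheSound CL R κ' ∧ c = ⟨false, κ', μ, σ, pc⟩) ∨ Halted ι (handlerMem CL R) c) := by
  obtain ⟨hallowed, hdenied⟩ := privSteps_handlerMem CL R op (faultLabels op Lpc L₁ L₂ L₃) ι
    (faultCache CL κ op Lpc L₁ L₂ L₃) μ σ pc (by simp [faultCache, installCache, addrOpLabel])
    (slotsCachedRule_faultCache hR κ op Lpc L₁ L₂ L₃)
  by_cases h : evalB (faultLabels op Lpc L₁ L₂ L₃) (R op).allow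
  · exact ⟨_, hallowed h, .inl ⟨_, cacheSound_setCacheOut_faultCache κ h, rfl⟩⟩
  · exact ⟨_, hdenied h, .inr (halted_handlerMem CL R ι _ μ _ TD)⟩

end Cache

section Simulation

variable {L : Type} [SemilatticeSup L] [OrderBot L] {CL : ConcreteLattice L} {R : RuleTable}

/-- `MatchState` with `CacheSound` in place of `CacheConsistent`. -/
structure MatchUser (CL : ConcreteLattice L) (R : RuleTable) (qs : AState L) (cs : CState) :
    Prop where
  priv : cs.priv = false
  cache : CacheSound CL R cs.kmem
  mem : ∀ p, Option.Rel (matchAtomC CL) (qs.mem p) (cs.umem p)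
  stk : List.Forall₂ (MatchStk CL) qs.stk cs.stk
  pc : cs.pc = ⟨qs.pc.val, CL.Tag qs.pc.lab⟩

theorem forall₂_matchStk_data_right {σ : List (StkElt L)} {v T : ℤ} {σc : List CStkElt}
    (h : List.Forall₂ (MatchStk CL) σ (.data ⟨v, T⟩ :: σc)) :
    ∃ l σ', σ = .data ⟨v, l⟩ :: σ' ∧ T = CL.Tag l ∧ List.Forall₂ (MatchStk CL) σ' σc := by
  obtain _ | ⟨⟨hm⟩ | ⟨hm⟩, h⟩ := h
  obtain ⟨rfl, rfl⟩ := CAtom.mk.inj (hm : matchAtomC CL _ _)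
  exact ⟨_, _, rfl, rfl, h⟩

theorem forall₂_matchStk_ret_right {σ : List (StkElt L)} {v T : ℤ} {σc : List CStkElt}
    (h : List.Forall₂ (MatchStk CL) σ (.ret ⟨v, T⟩ false :: σc)) :
    ∃ l σ', σ = .ret ⟨v, l⟩ :: σ' ∧ T = CL.Tag l ∧ List.Forall₂ (MatchStk CL) σ' σc := by
  obtain _ | ⟨⟨hm⟩ | ⟨hm⟩, h⟩ := h
  obtain ⟨rfl, rfl⟩ := CAtom.mk.inj (hm : matchAtomC CL _ _)
  exact ⟨_, _, rfl, rfl, h⟩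

theorem exists_of_matchMem_some {μ : ℤ → Option (Atom L)} {μc : ℤ → Option CAtom}
    (h : ∀ p, Option.Rel (matchAtomC CL) (μ p) (μc p)) {p m T : ℤ} (hp : μc p = some ⟨m, T⟩) :
    ∃ l, μ p = some ⟨m, l⟩ ∧ T = CL.Tag l := by
  have hrel := h p
  rw [hp] at hrel
  cases hμ : μ p with
  | none => simp [hμ] at hrel
  | some a =>
    rw [hμ, Option.rel_some_some] at hrel
    obtain ⟨rfl, rfl⟩ := CAtom.mk.inj hrel
    exact ⟨a.lab, rfl, rfl⟩

theorem matchMem_update {μ : ℤ → Option (Atom L)} {μc : ℤ → Option CAtom}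
    (h : ∀ p, Option.Rel (matchAtomC CL) (μ p) (μc p)) (p m : ℤ) (l : L) :
    ∀ q, Option.Rel (matchAtomC CL) (updMem μ p ⟨m, l⟩ q) (updC μc p ⟨m, CL.Tag l⟩ q) := by
  intro q
  by_cases hq : q = p
  · simp only [updMem, updC, if_pos hq]
    exact .some rfl
  · simp only [updMem, updC, if_neg hq]
    exact h q

theorem MatchUser.hit {ι φ : InstrMem} {qs : AState L} {cs cs' : CState} {α : Option CAtom}
    (hm : MatchUser CL R qs cs) (hs : CStep ι φ cs α cs') (hpriv : cs'.priv = false) :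
    ∃ α₁ qs', QStep R ι qs α₁ qs' ∧ Option.Rel (matchAtomC CL) α₁ α ∧ MatchUser CL R qs' cs' := by
  obtain ⟨μ, σ, n, Lpc⟩ := qs
  obtain ⟨priv, κ, μc, σc, pc⟩ := cs
  obtain ⟨hp, hκ, hμ, hσ, hpc⟩ := hm
  dsimp only at hp hκ hμ hσ hpc
  subst hp hpc
  cases hs with
  | addH hi hin hout =>
    obtain ⟨L₁, σ₁, rfl, rfl, hσ₁⟩ := forall₂_matchStk_data_right hσ
    obtain ⟨L₂, σ₂, rfl, rfl, hσ₂⟩ := forall₂_matchStk_data_right hσ₁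
    obtain ⟨Lrpc, Lr, hJ, rfl, rfl⟩ := hκ.hit (L₃ := ⊥) hin hout
    exact ⟨_, _, .add hi hJ, .none, ⟨rfl, hκ, hμ, .cons (.data rfl) hσ₂, rfl⟩⟩
  | pushH hi hin hout =>
    obtain ⟨Lrpc, Lr, hJ, rfl, rfl⟩ := hκ.hit (L₁ := ⊥) (L₂ := ⊥) (L₃ := ⊥) hin hout
    exact ⟨_, _, .push hi hJ, .none, ⟨rfl, hκ, hμ, .cons (.data rfl) hσ, rfl⟩⟩
  | loadH hi hp hin hout =>
    obtain ⟨L₁, σ₁, rfl, rfl, hσ₁⟩ := forall₂_matchStk_data_right hσ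
    obtain ⟨L₂, hp', rfl⟩ := exists_of_matchMem_some hμ hp
    obtain ⟨Lrpc, Lr, hJ, rfl, rfl⟩ := hκ.hit (L₃ := ⊥) hin hout
    exact ⟨_, _, .load hi hp' hJ, .none, ⟨rfl, hκ, hμ, .cons (.data rfl) hσ₁, rfl⟩⟩
  | storeH hi hp hin hout =>
    obtain ⟨L₁, σ₁, rfl, rfl, hσ₁⟩ := forall₂_matchStk_data_right hσ
    obtain ⟨L₂, σ₂, rfl, rfl, hσ₂⟩ := forall₂_matchStk_data_right hσ₁
    obtain ⟨L₃, hp', rfl⟩ := exists_of_matchMem_some hμ hp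
    obtain ⟨Lrpc, Lr, hJ, rfl, rfl⟩ := hκ.hit hin hout
    exact ⟨_, _, .store hi hp' hJ, .none, ⟨rfl, hκ, matchMem_update hμ _ _ _, hσ₂, rfl⟩⟩
  | jumpH hi hin hout =>
    obtain ⟨L₁, σ₁, rfl, rfl, hσ₁⟩ := forall₂_matchStk_data_right hσ
    obtain ⟨Lrpc, Lr, hJ, rfl, rfl⟩ := hκ.hit (L₂ := ⊥) (L₃ := ⊥) hin hout
    exact ⟨_, _, .jump hi hJ, .none, ⟨rfl, hκ, hμ, hσ₁, rfl⟩⟩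
  | bnzH hi hin hout =>
    obtain ⟨L₁, σ₁, rfl, rfl, hσ₁⟩ := forall₂_matchStk_data_right hσ
    obtain ⟨Lrpc, Lr, hJ, rfl, rfl⟩ := hκ.hit (L₂ := ⊥) (L₃ := ⊥) hin hout
    exact ⟨_, _, .bnz hi hJ, .none, ⟨rfl, hκ, hμ, hσ₁, rfl⟩⟩
  | callH hi hin hout =>
    obtain ⟨L₁, σ₁, rfl, rfl, hσ₁⟩ := forall₂_matchStk_data_right hσ
    obtain ⟨Lrpc, Lr, hJ, rfl, rfl⟩ := hκ.hit (L₂ := ⊥) (L₃ := ⊥) hin hout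
    exact ⟨_, _, .call hi hJ, .none, ⟨rfl, hκ, hμ, .cons (.ret rfl) hσ₁, rfl⟩⟩
  | retH hi hin hout =>
    obtain ⟨L₁, σ₁, rfl, rfl, hσ₁⟩ := forall₂_matchStk_ret_right hσ
    obtain ⟨Lrpc, Lr, hJ, rfl, rfl⟩ := hκ.hit (L₂ := ⊥) (L₃ := ⊥) hin hout
    exact ⟨_, _, .ret hi hJ, .none, ⟨rfl, hκ, hμ, hσ₁, rfl⟩⟩
  | outputH hi hin hout =>
    obtain ⟨L₁, σ₁, rfl, rfl, hσ₁⟩ := forall₂_matchStk_data_right hσ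
    obtain ⟨Lrpc, Lr, hJ, rfl, rfl⟩ := hκ.hit (L₂ := ⊥) (L₃ := ⊥) hin hout
    exact ⟨_, _, .output hi hJ, .some rfl, ⟨rfl, hκ, hμ, hσ₁, rfl⟩⟩
  | _ => cases hpriv

theorem MatchUser.miss {ι φ : InstrMem} {qs : AState L} {cs cs' : CState} {α : Option CAtom}
    (hm : MatchUser CL R qs cs) (hs : CStep ι φ cs α cs') (hpriv : cs'.priv = true) :
    α = none ∧ ∃ op L₁ L₂ L₃, cs' = ⟨true, faultCache CL cs.kmem op qs.pc.lab L₁ L₂ L₃, cs.umem,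
      .ret cs.pc false :: cs.stk, ⟨0, TD⟩⟩ := by
  obtain ⟨μ, σ, n, Lpc⟩ := qs
  obtain ⟨priv, κ, μc, σc, pc⟩ := cs
  obtain ⟨hp, -, hμ, hσ, hpc⟩ := hm
  dsimp only at hp hμ hσ hpc
  subst hp hpc
  refine ⟨?_, ?_⟩
  · cases hs <;> first | rfl | cases hpriv
  cases hs with
  | addM _ _ =>
    obtain ⟨L₁, _, -, rfl, hσ₁⟩ := forall₂_matchStk_data_right hσ
    obtain ⟨L₂, _, -, rfl, -⟩ := forall₂_matchStk_data_right hσ₁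
    exact ⟨.add, L₁, L₂, ⊥, rfl⟩
  | pushM _ _ => exact ⟨.push, ⊥, ⊥, ⊥, rfl⟩
  | loadM _ hp _ =>
    obtain ⟨L₁, _, -, rfl, -⟩ := forall₂_matchStk_data_right hσ
    obtain ⟨L₂, -, rfl⟩ := exists_of_matchMem_some hμ hp
    exact ⟨.load, L₁, L₂, ⊥, rfl⟩
  | storeM _ hp _ =>
    obtain ⟨L₁, _, -, rfl, hσ₁⟩ := forall₂_matchStk_data_right hσ
    obtain ⟨L₂, _, -, rfl, -⟩ := forall₂_matchStk_data_right hσ₁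
    obtain ⟨L₃, -, rfl⟩ := exists_of_matchMem_some hμ hp
    exact ⟨.store, L₁, L₂, L₃, rfl⟩
  | jumpM _ _ | bnzM _ _ | callM _ _ | outputM _ _ =>
    obtain ⟨L₁, _, -, rfl, -⟩ := forall₂_matchStk_data_right hσ
    exact ⟨_, L₁, ⊥, ⊥, rfl⟩
  | retM _ _ =>
    obtain ⟨L₁, _, -, rfl, -⟩ := forall₂_matchStk_ret_right hσ
    exact ⟨.ret, L₁, ⊥, ⊥, rfl⟩
  | _ => cases hpriv

variable (CL R) in
/-- Kernel steps are silent and deterministic, so a state inside the fault handler can be related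
to the symbolic state that the handler returns to. -/
def SimRel (qs : InstrMem × AState L) (cs : InstrMem × CState) : Prop :=
  cs.1 = qs.1 ∧ ∃ c, PrivSteps cs.1 (handlerMem CL R) cs.2 c ∧
    (MatchUser CL R qs.2 c ∨ Halted cs.1 (handlerMem CL R) c)

variable (CL)

def CMachine (R : RuleTable) : Machine (InstrMem × CState) CAtom CInput :=
  ⟨CStepP (handlerMem CL R), cInit⟩

theorem isSimulation_simRel (hR : WellFormedTable R) :
    IsSimulation (QMachine R) (CMachine CL R) (SimRel CL R) (matchAtomC CL) := by
  rintro ⟨ι, qs⟩ ⟨ι', cs⟩ α ⟨ι'', cs'⟩ ⟨hι', c, hrun, hc⟩ ⟨hι'', hs⟩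
  dsimp only at hι' hι'' hrun hc hs
  subst ι' ι''
  cases hrun with
  | refl =>
    rcases hc with hm | hhalt
    · cases hpriv : cs'.priv
      · obtain ⟨α₁, qs', hq, hα, hm'⟩ := hm.hit hs hpriv
        exact .inr ⟨α₁, (ι, qs'), ⟨rfl, hq⟩, hα, rfl, _, .refl _, .inl hm'⟩
      · obtain ⟨rfl, op, L₁, L₂, L₃, rfl⟩ := hm.miss hs hpriv
        obtain ⟨c', hrun', hc'⟩ := handler_resolves_fault hR ι cs.kmem cs.umem cs.stk cs.pc op
          qs.pc.lab L₁ L₂ L₃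
        refine .inl ⟨rfl, rfl, c', hrun', hc'.imp_left ?_⟩
        rintro ⟨κ', hκ', rfl⟩
        exact ⟨rfl, hκ', hm.mem, hm.stk, hm.pc⟩
    · exact absurd hs (hhalt _ _)
  | step hp hs₁ hrest =>
    obtain ⟨rfl, rfl⟩ := CStep.deterministic_of_priv hp hs hs₁
    exact .inl ⟨rfl, rfl, c, hrest, hc⟩

theorem simRel_init {i : AInput L} {ic : CInput} (h : matchInputC CL i ic) :
    SimRel CL R (aInit i) (cInit ic) := by
  obtain ⟨hprog, hargs, hsize, htag⟩ := h
  refine ⟨hprog, _, .refl _, .inl ⟨rfl, cacheSound_initCache R, fun p => ?_, ?_, ?_⟩⟩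
  · simp only [aInit, cInit, hsize, htag]
    split_ifs
    exacts [.some rfl, .none]
  · simp only [aInit, cInit, hargs, List.map_map]
    exact List.forall₂_map_left_iff.mpr (List.forall₂_map_right_iff.mpr
      (List.forall₂_same.mpr fun _ _ => .data rfl))
  · simp [aInit, cInit, htag]

theorem concrete_refines_symbolic (hR : WellFormedTable R) :
    Refinement (QMachine R) (CMachine CL R) (matchInputC CL) (matchAtomC CL) :=
  (isSimulation_simRel CL hR).stateRefinement.refinement fun _ _ => simRel_init CL

end Simulation

/-- The concrete machine running the fault handler compiled
from `𝓡^abs` refines the abstract IFC machine through `(≈ⁱᶜ, ≈ᵉᶜ)`. -/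
theorem concrete_refines_abstract {L : Type} [SemilatticeSup L] [OrderBot L]
    (CL : ConcreteLattice L) :
    ∀ (i : AInput L) (ic : CInput) (t₂ : List CAtom),
      matchInputC CL i ic →
      Emits (CStepP (handlerMem CL RabsTable)) (cInit ic) t₂ →
      ∃ t₁ : List (Atom L),
        Emits AStepP (aInit i) t₁ ∧ List.Forall₂ (matchAtomC CL) t₁ t₂ :=
  (concrete_refines_symbolic CL wellFormedTable_rabsTable).mono_left (M₁' := AMachine L)
    (fun _ _ _ ⟨hprog, hq⟩ => ⟨hprog, AStep.of_qStep_rabsTable hq⟩) rfl
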